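/- arXiv:1809.10148 — 7 statements merged into one kernel-verified Lean document; each statement's English description precedes it below -/
import Mathlib

section
/- Let L be a positive integer, B a symmetric L×L real matrix, i₀ ∈ Fin L, S a finite set of integers, and F : (Fin L → ℤ) → ℂ a function such that (i) whenever F ℓ ≠ 0 one has ℓ v ∈ S for every index v ≠ i₀, and (ii) there exist constants c, d ≥ 0 with ‖F ℓ‖ ≤ c·(1 + |ℓ i₀|)^d for all ℓ. If B i₀ i₀ < 0, then for every τ ∈ ℂ with Im τ > 0 the family ℓ ↦ F ℓ · exp(2πi τ · (−(Σ_{v,w} (ℓ v) · B v w · (ℓ w))/4)) is absolutely summable over ℓ : Fin L → ℤ; and if B i₀ i₀ > 0, then this family is absolutely summable for every τ with Im τ < 0. -/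
/-!
Only the coordinate `ℓ i₀` of a summation index is unbounded on the support of `F`, the others
lying in the finite set `S`. Isolating the diagonal entry, the quadratic form is
`B i₀ i₀ n² + O(|n|) + O(1)` in `n = ℓ i₀`, uniformly in the remaining coordinates, and
`|exp(2πiτ(-Q/4))| = exp(π Im τ Q / 2)`. When `B i₀ i₀ Im τ < 0` each term is therefore dominated
by `exp(-α n² + a|n| + b)` with `α > 0` (the polynomial growth of `F` is absorbed via
`(1 + |n|)^d ≤ exp(d|n|)`), a theta-type series, times the indicator of finitely many values of
the other coordinates.
-/

open Complex Real

lemma summable_exp_mul_sq_add_mul_abs {α : ℝ} (hα : α < 0) (a : ℝ) :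
    Summable fun n : ℤ => Real.exp (α * (n : ℝ) ^ 2 + a * |(n : ℝ)|) := by
  refine (summable_pow_mul_jacobiTheta₂_term_bound (a / (2 * π))
    (div_pos (neg_pos.mpr hα) pi_pos) 0).congr fun n => ?_
  rw [pow_zero, one_mul, Int.cast_abs]
  congr 1
  field_simp
  ring

lemma rpow_one_add_abs_le_exp {d : ℝ} (hd : 0 ≤ d) (x : ℝ) :
    (1 + |x|) ^ d ≤ Real.exp (d * |x|) := by
  calc (1 + |x|) ^ d ≤ Real.exp |x| ^ d := by gcongr; linarith [Real.add_one_le_exp |x|]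
    _ = Real.exp (d * |x|) := by rw [← Real.exp_mul, mul_comm]

lemma norm_exp_two_pi_I_mul_neg_div_four (τ : ℂ) (Q : ℝ) :
    ‖Complex.exp (2 * π * I * τ * (-(Q : ℂ) / 4))‖ = Real.exp (π * τ.im / 2 * Q) := by
  rw [Complex.norm_exp, show 2 * π * I * τ * (-(Q : ℂ) / 4) = ((-(π * Q / 2) : ℝ) : ℂ) * (I * τ) by
    push_cast; ring, re_ofReal_mul, I_mul_re]
  congr 1
  ring

lemma abs_quadForm_sub_diag_le {ι : Type*} [Fintype ι] [DecidableEq ι]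
    (B : Matrix ι ι ℝ) (x : ι → ℝ) (i : ι) {R : ℝ} (hR : 0 ≤ R) (hx : ∀ v, v ≠ i → |x v| ≤ R) :
    |∑ v, ∑ w, x v * B v w * x w - B i i * x i ^ 2|
      ≤ (∑ v, ∑ w, |B v w|) * (R * (R + |x i|)) := by
  have hx' : ∀ v, |x v| ≤ R + |x i| := fun v => by
    by_cases hv : v = i
    · subst hv; linarith
    · linarith [hx v hv, abs_nonneg (x i)]
  have hdiag : B i i * x i ^ 2 = ∑ v, ∑ w, if v = i ∧ w = i then B i i * x i ^ 2 else 0 := by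
    simp [ite_and]
  have hterm : ∀ v w, |x v * B v w * x w - (if v = i ∧ w = i then B i i * x i ^ 2 else 0)|
      ≤ |B v w| * (R * (R + |x i|)) := by
    intro v w
    by_cases hvw : v = i ∧ w = i
    · rw [if_pos hvw, hvw.1, hvw.2, show x i * B i i * x i - B i i * x i ^ 2 = 0 by ring, abs_zero]
      positivity
    · have hprod : |x v| * |x w| ≤ R * (R + |x i|) := by
        rcases not_and_or.mp hvw with hv | hw
        · exact mul_le_mul (hx v hv) (hx' w) (abs_nonneg _) hR
        · rw [mul_comm R]
          exact mul_le_mul (hx' v) (hx w hw) (abs_nonneg _) (by positivity)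
      rw [if_neg hvw, sub_zero, abs_mul, abs_mul, mul_right_comm, mul_comm (|B v w|)]
      exact mul_le_mul_of_nonneg_right hprod (abs_nonneg _)
  rw [hdiag, ← Finset.sum_sub_distrib, Finset.sum_mul]
  refine (Finset.abs_sum_le_sum_abs _ _).trans (Finset.sum_le_sum fun v _ => ?_)
  rw [← Finset.sum_sub_distrib, Finset.sum_mul]
  exact (Finset.abs_sum_le_sum_abs _ _).trans (Finset.sum_le_sum fun w _ => hterm v w)

lemma summable_indicator_setOf_forall_ne_mem {ι α : Type*} [Fintype ι] [DecidableEq ι] (i : ι)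
    (S : Finset α) {g : α → ℝ} (hg : Summable g) (hg0 : 0 ≤ g) :
    Summable ({ℓ : ι → α | ∀ v, v ≠ i → ℓ v ∈ S}.indicator fun ℓ => g (ℓ i)) := by
  classical
  set T : Finset ({ j // j ≠ i } → α) := Fintype.piFinset fun _ => S
  have hT : Summable fun r => if r ∈ T then (1 : ℝ) else 0 :=
    summable_of_ne_finset_zero fun r hr => if_neg hr
  have hprod := hg.mul_of_nonneg hT hg0 fun r => by dsimp only; split_ifs <;> norm_num
  refine ((Equiv.funSplitAt i α).summable_iff.mpr hprod).congr fun ℓ => ?_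
  simp [Set.indicator, T, Fintype.mem_piFinset, Equiv.funSplitAt, Equiv.piSplitAt]

theorem summable_norm_mul_exp_quadForm {ι : Type*} [Fintype ι] [DecidableEq ι]
    (B : Matrix ι ι ℝ) (i₀ : ι) (S : Finset ℤ) (F : (ι → ℤ) → ℂ)
    (hsupp : ∀ ℓ : ι → ℤ, F ℓ ≠ 0 → ∀ v : ι, v ≠ i₀ → ℓ v ∈ S)
    {c d : ℝ} (hc : 0 ≤ c) (hd : 0 ≤ d) (hF : ∀ ℓ : ι → ℤ, ‖F ℓ‖ ≤ c * (1 + |(ℓ i₀ : ℝ)|) ^ d)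
    (τ : ℂ) (hτ : B i₀ i₀ * τ.im < 0) :
    Summable fun ℓ : ι → ℤ =>
      ‖F ℓ * Complex.exp (2 * π * I * τ *
        (-((∑ v, ∑ w, (ℓ v : ℝ) * B v w * (ℓ w : ℝ) : ℝ) : ℂ) / 4))‖ := by
  set t := π * τ.im / 2
  set R := ∑ s ∈ S, |(s : ℝ)|
  set M := ∑ v, ∑ w, |B v w|
  have hR : 0 ≤ R := Finset.sum_nonneg fun _ _ => abs_nonneg _
  have hα : t * B i₀ i₀ < 0 := by
    rw [show t * B i₀ i₀ = π / 2 * (B i₀ i₀ * τ.im) by ring]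
    exact mul_neg_of_pos_of_neg (by positivity) hτ
  set g : ℤ → ℝ := fun n => c * Real.exp (|t| * M * R ^ 2) *
    Real.exp (t * B i₀ i₀ * (n : ℝ) ^ 2 + (d + |t| * M * R) * |(n : ℝ)|)
  have hg : Summable g := (summable_exp_mul_sq_add_mul_abs hα _).mul_left _
  have hg0 : 0 ≤ g := fun n => by positivity
  refine (summable_indicator_setOf_forall_ne_mem i₀ S hg hg0).of_nonneg_of_le
    (fun _ => norm_nonneg _) fun ℓ => ?_
  by_cases hℓ : F ℓ = 0
  · rw [hℓ, zero_mul, norm_zero]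
    exact Set.indicator_nonneg (fun _ _ => hg0 _) _
  rw [Set.indicator_of_mem (s := {ℓ : ι → ℤ | ∀ v, v ≠ i₀ → ℓ v ∈ S}) (hsupp ℓ hℓ), norm_mul,
    norm_exp_two_pi_I_mul_neg_div_four]
  set Q := ∑ v, ∑ w, (ℓ v : ℝ) * B v w * (ℓ w : ℝ)
  set n : ℝ := (ℓ i₀ : ℝ) with hn
  have hQ : |Q - B i₀ i₀ * n ^ 2| ≤ M * (R * (R + |n|)) :=
    abs_quadForm_sub_diag_le B (fun v => (ℓ v : ℝ)) i₀ hR fun v hv =>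
      Finset.single_le_sum (f := fun s : ℤ => |(s : ℝ)|) (fun _ _ => abs_nonneg _)
        (hsupp ℓ hℓ v hv)
  have htQ : t * Q ≤ t * B i₀ i₀ * n ^ 2 + |t| * (M * (R * (R + |n|))) := by
    have : t * (Q - B i₀ i₀ * n ^ 2) ≤ |t| * (M * (R * (R + |n|))) :=
      (le_abs_self _).trans (by rw [abs_mul]; exact mul_le_mul_of_nonneg_left hQ (abs_nonneg t))
    linarith
  calc ‖F ℓ‖ * Real.exp (t * Q)
      ≤ c * Real.exp (d * |n|) * Real.exp (t * Q) := by
        gcongr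
        exact (hF ℓ).trans (mul_le_mul_of_nonneg_left (rpow_one_add_abs_le_exp hd n) hc)
    _ ≤ c * Real.exp (d * |n|) * Real.exp (t * B i₀ i₀ * n ^ 2 + |t| * (M * (R * (R + |n|)))) := by
        gcongr
    _ = g (ℓ i₀) := by
        simp only [g, ← hn, mul_assoc c, ← Real.exp_add]
        congr 2
        ring

theorem homological_block_convergence_general
    (L : ℕ) (B : Matrix (Fin L) (Fin L) ℝ)
    (i₀ : Fin L) (S : Finset ℤ) (F : (Fin L → ℤ) → ℂ)
    (hsupp : ∀ ℓ : Fin L → ℤ, F ℓ ≠ 0 → ∀ v : Fin L, v ≠ i₀ → ℓ v ∈ S)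
    (hgrowth : ∃ c d : ℝ, 0 ≤ c ∧ 0 ≤ d ∧
      ∀ ℓ : Fin L → ℤ, ‖F ℓ‖ ≤ c * (1 + |(ℓ i₀ : ℝ)|) ^ d) :
    (B i₀ i₀ < 0 → ∀ τ : ℂ, 0 < τ.im →
      Summable fun ℓ : Fin L → ℤ =>
        ‖F ℓ * Complex.exp (2 * Real.pi * Complex.I * τ *
          (-((∑ v, ∑ w, (ℓ v : ℝ) * B v w * (ℓ w : ℝ) : ℝ) : ℂ) / 4))‖) ∧
    (0 < B i₀ i₀ → ∀ τ : ℂ, τ.im < 0 →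
      Summable fun ℓ : Fin L → ℤ =>
        ‖F ℓ * Complex.exp (2 * Real.pi * Complex.I * τ *
          (-((∑ v, ∑ w, (ℓ v : ℝ) * B v w * (ℓ w : ℝ) : ℝ) : ℂ) / 4))‖) := by
  obtain ⟨c, d, hc, hd, hF⟩ := hgrowth
  exact ⟨fun hB τ hτ => summable_norm_mul_exp_quadForm B i₀ S F hsupp hc hd hF τ
      (mul_neg_of_neg_of_pos hB hτ),
    fun hB τ hτ => summable_norm_mul_exp_quadForm B i₀ S F hsupp hc hd hF τ
      (mul_neg_of_pos_of_neg hB hτ)⟩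

/-- convergence of homological blocks for plumbings with a single
high-valency vertex.  If `B i₀ i₀ < 0` the series converges for `Im τ > 0`
(i.e. `|q| < 1`), and if `B i₀ i₀ > 0` it converges for `Im τ < 0`. -/
theorem homological_block_convergence
    (L : ℕ) (hL : 0 < L) (B : Matrix (Fin L) (Fin L) ℝ) (hB : B.IsSymm)
    (i₀ : Fin L) (S : Finset ℤ) (F : (Fin L → ℤ) → ℂ)
    (hsupp : ∀ ℓ : Fin L → ℤ, F ℓ ≠ 0 → ∀ v : Fin L, v ≠ i₀ → ℓ v ∈ S)
    (hgrowth : ∃ c d : ℝ, 0 ≤ c ∧ 0 ≤ d ∧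
      ∀ ℓ : Fin L → ℤ, ‖F ℓ‖ ≤ c * (1 + |(ℓ i₀ : ℝ)|) ^ d) :
    (B i₀ i₀ < 0 → ∀ τ : ℂ, 0 < τ.im →
      Summable fun ℓ : Fin L → ℤ =>
        ‖F ℓ * Complex.exp (2 * Real.pi * Complex.I * τ *
          (-((∑ v, ∑ w, (ℓ v : ℝ) * B v w * (ℓ w : ℝ) : ℝ) : ℂ) / 4))‖) ∧
    (0 < B i₀ i₀ → ∀ τ : ℂ, τ.im < 0 →
      Summable fun ℓ : Fin L → ℤ =>
        ‖F ℓ * Complex.exp (2 * Real.pi * Complex.I * τ *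
          (-((∑ v, ∑ w, (ℓ v : ℝ) * B v w * (ℓ w : ℝ) : ℝ) : ℂ) / 4))‖) :=
  homological_block_convergence_general L B i₀ S F hsupp hgrowth
end

section
/- Let m be a positive integer. Let Ex_m be the set of exact divisors of m, i.e. positive divisors n of m with gcd(n, m/n) = 1, equipped with the operation n ∗ n' = n n' / gcd(n, n')². Let O_m be the set of a ∈ ZMod (2m) such that a² ≡ 1 (mod 4m) (for any, equivalently every, integer lift of a), equipped with multiplication. Then: (1) Ex_m is a group under ∗ with identity 1; (2) O_m is a group under multiplication in ZMod (2m); (3) for each n ∈ Ex_m there is a unique element a(n) ∈ ZMod (2m) satisfying a(n) ≡ −1 (mod 2n) and a(n) ≡ 1 (mod 2m/n); (4) a(n) ∈ O_m; and (5) the map n ↦ a(n) is a group isomorphism from (Ex_m, ∗) onto (O_m, ·). -/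
/-- `n` is an exact divisor of `m`: a positive divisor with `gcd(n, m/n) = 1`. -/
def IsExactDivisor (m n : ℕ) : Prop := 0 < n ∧ n ∣ m ∧ Nat.gcd n (m / n) = 1

/-- The group operation on exact divisors: `n ∗ n' = n n' / gcd(n,n')²`. -/
def exMul (n n' : ℕ) : ℕ := n * n' / (Nat.gcd n n') ^ 2

/-- `a ∈ O_m`: every integer lift `k` of `a ∈ ZMod (2m)` satisfies `k² ≡ 1 (mod 4m)`. -/
def IsOm (m : ℕ) (a : ZMod (2 * m)) : Prop :=
  ∀ k : ℤ, (k : ZMod (2 * m)) = a → (4 * (m : ℤ)) ∣ k ^ 2 - 1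

/-- `a = a(n)`: every integer lift `k` of `a ∈ ZMod (2m)` satisfies
`k ≡ −1 (mod 2n)` and `k ≡ 1 (mod 2m/n)`. -/
def IsAOf (m n : ℕ) (a : ZMod (2 * m)) : Prop :=
  ∀ k : ℤ, (k : ZMod (2 * m)) = a →
    ((2 * (n : ℤ)) ∣ k + 1 ∧ (2 * ((m / n : ℕ) : ℤ)) ∣ k - 1)

/-- lcm-style combination: if `a,b` coprime and `2a, 2b` both divide `x`, so does `2ab`. -/
lemma aux_two_mul_coprime_dvd {a b : ℕ} (h : Nat.Coprime a b) {x : ℤ}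
    (ha : (2 * (a:ℤ)) ∣ x) (hb : (2 * (b:ℤ)) ∣ x) : (2 * ((a*b : ℕ) :ℤ)) ∣ x := by
  obtain ⟨s, rfl⟩ := ha
  have h2 : (b:ℤ) ∣ (a:ℤ) * s := by
    have h3 : (2:ℤ) * b ∣ 2 * ((a:ℤ) * s) := by
      have := hb; rw [show 2*(a:ℤ)*s = 2*((a:ℤ)*s) by ring] at this; exact this
    exact (mul_dvd_mul_iff_left (two_ne_zero (α := ℤ))).mp h3
  have hcop : IsCoprime (b:ℤ) (a:ℤ) := Nat.isCoprime_iff_coprime.mpr h.symm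
  obtain ⟨t, rfl⟩ := hcop.dvd_of_dvd_mul_left h2
  exact ⟨t, by push_cast; ring⟩

lemma aux_cast_val {m : ℕ} (hm : 0 < m) (a : ZMod (2*m)) :
    (((a.val : ℤ)) : ZMod (2*m)) = a := by
  haveI : NeZero (2*m) := ⟨by omega⟩
  push_cast
  exact ZMod.natCast_rightInverse a

lemma aux_dvd_of_cast_eq {m : ℕ} (hm : 0 < m) {k l : ℤ}
    (h : (k : ZMod (2*m)) = (l : ZMod (2*m))) : (2*(m:ℤ)) ∣ k - l := by
  haveI : NeZero (2*m) := ⟨by omega⟩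
  have h0 : ((k - l : ℤ) : ZMod (2*m)) = 0 := by push_cast [h]; ring
  have := (ZMod.intCast_zmod_eq_zero_iff_dvd (k - l) (2*m)).mp h0
  push_cast at this
  exact this

lemma aux_cast_eq_of_dvd {m : ℕ} (hm : 0 < m) {k l : ℤ} (h : (2*(m:ℤ)) ∣ k - l) :
    (k : ZMod (2*m)) = (l : ZMod (2*m)) := by
  haveI : NeZero (2*m) := ⟨by omega⟩
  have h' : ((2*m : ℕ):ℤ) ∣ k - l := by push_cast; exact h
  have h0 := (ZMod.intCast_zmod_eq_zero_iff_dvd (k - l) (2*m)).mpr h'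
  push_cast at h0
  exact sub_eq_zero.mp h0

lemma aux_exMul_key {m n n' : ℕ} (hm : 0 < m) (hn : IsExactDivisor m n)
    (hn' : IsExactDivisor m n') :
    IsExactDivisor m (exMul n n') ∧
    (∀ k l : ℤ, (2 * (n:ℤ)) ∣ k + 1 → (2 * ((m/n : ℕ):ℤ)) ∣ k - 1 →
      (2 * (n':ℤ)) ∣ l + 1 → (2 * ((m/n' : ℕ):ℤ)) ∣ l - 1 →
      (2 * ((exMul n n' : ℕ):ℤ)) ∣ k*l + 1 ∧ (2 * ((m / exMul n n' : ℕ):ℤ)) ∣ k*l - 1) := by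
  obtain ⟨hn0, hnm, hnc⟩ := hn
  obtain ⟨hn'0, hn'm, hn'c⟩ := hn'
  set d := Nat.gcd n n' with hd
  have hd0 : 0 < d := Nat.gcd_pos_of_pos_left n' hn0
  set a₀ := n / d with ha₀
  set b₀ := n' / d with hb₀
  have hna : n = d * a₀ := (Nat.mul_div_cancel' (Nat.gcd_dvd_left n n')).symm
  have hnb : n' = d * b₀ := (Nat.mul_div_cancel' (Nat.gcd_dvd_right n n')).symm
  have ha₀n : a₀ ∣ n := ⟨d, by rw [hna]; ring⟩
  have hb₀n' : b₀ ∣ n' := ⟨d, by rw [hnb]; ring⟩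
  have hdn : d ∣ n := Nat.gcd_dvd_left n n'
  have hdn' : d ∣ n' := Nat.gcd_dvd_right n n'
  have hab : Nat.Coprime a₀ b₀ := Nat.coprime_div_gcd_div_gcd hd0
  -- lcm divides m
  have hLm : Nat.lcm n n' ∣ m := Nat.lcm_dvd hnm hn'm
  have hLb : n * b₀ = Nat.lcm n n' := by
    rw [Nat.lcm, ← hd, hb₀, Nat.mul_div_assoc n hdn']
  have hLa : n' * a₀ = Nat.lcm n n' := by
    rw [Nat.lcm, ← hd, ha₀, Nat.mul_comm n n', Nat.mul_div_assoc n' hdn]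
  have hb₀mn : b₀ ∣ m / n := (Nat.dvd_div_iff_mul_dvd hnm).mpr (by rw [hLb]; exact hLm)
  have ha₀mn' : a₀ ∣ m / n' := (Nat.dvd_div_iff_mul_dvd hn'm).mpr (by rw [hLa]; exact hLm)
  set q := exMul n n' with hq
  have hqab : q = a₀ * b₀ := by
    rw [hq, exMul, ← hd, show n * n' = d^2 * (a₀ * b₀) by rw [hna, hnb]; ring,
      Nat.mul_div_cancel_left _ (by positivity)]
  set c := (m / n) / b₀ with hc
  have hbc : b₀ * c = m / n := Nat.mul_div_cancel' hb₀mn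
  have hqm : q * (d * c) = m := by
    rw [hqab, show a₀ * b₀ * (d * c) = (d * a₀) * (b₀ * c) by ring, ← hna, hbc,
      Nat.mul_div_cancel' hnm]
  have hq0 : 0 < q := by
    rcases Nat.eq_zero_or_pos q with h | h
    · exfalso; rw [h, zero_mul] at hqm; omega
    · exact h
  have hmq : m / q = d * c := by rw [← hqm, Nat.mul_div_cancel_left _ hq0]
  have hcmn : c ∣ m / n := ⟨b₀, by rw [← hbc]; ring⟩
  have hcmn' : c ∣ m / n' := by
    refine (Nat.dvd_div_iff_mul_dvd hn'm).mpr ?_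
    have h1 : n' * c = d * (m / n) := by rw [hnb, ← hbc]; ring
    have h2 : (d * (m / n)) * a₀ = m := by
      rw [show d * (m / n) * a₀ = (d * a₀) * (m / n) by ring, ← hna, Nat.mul_div_cancel' hnm]
    rw [h1]
    exact ⟨a₀, h2.symm⟩
  -- coprimality facts
  have cop_nmn : Nat.Coprime n (m / n) := hnc
  have cop_n'mn' : Nat.Coprime n' (m / n') := hn'c
  have cop_ad : Nat.Coprime a₀ d :=
    Nat.Coprime.coprime_dvd_left ha₀mn' (Nat.Coprime.coprime_dvd_right hdn' cop_n'mn'.symm)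
  have cop_ac : Nat.Coprime a₀ c :=
    Nat.Coprime.coprime_dvd_left ha₀n (Nat.Coprime.coprime_dvd_right hcmn cop_nmn)
  have cop_bd : Nat.Coprime b₀ d :=
    Nat.Coprime.coprime_dvd_left hb₀mn (Nat.Coprime.coprime_dvd_right hdn cop_nmn.symm)
  have cop_bc : Nat.Coprime b₀ c :=
    Nat.Coprime.coprime_dvd_left hb₀n' (Nat.Coprime.coprime_dvd_right hcmn' cop_n'mn')
  have cop_dc : Nat.Coprime d c :=
    Nat.Coprime.coprime_dvd_left hdn (Nat.Coprime.coprime_dvd_right hcmn cop_nmn)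
  have hqexact : IsExactDivisor m q := by
    refine ⟨hq0, ⟨d * c, hqm.symm⟩, ?_⟩
    have : Nat.Coprime q (m / q) := by
      rw [hmq, hqab]
      exact Nat.Coprime.mul (cop_ad.mul_right cop_ac) (cop_bd.mul_right cop_bc)
    exact this
  refine ⟨hqexact, fun k l hk1 hk2 hl1 hl2 => ?_⟩
  -- integer divisibility facts
  have dvd_of_nat : ∀ {x y : ℕ} {z : ℤ}, x ∣ y → (2 * (y:ℤ)) ∣ z → (2 * (x:ℤ)) ∣ z := by
    intro x y z hxy hyz
    exact dvd_trans (by exact_mod_cast Nat.mul_dvd_mul_left 2 hxy) hyz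
  have ha_k1 : (2 * (a₀:ℤ)) ∣ k + 1 := dvd_of_nat ha₀n hk1
  have ha_l2 : (2 * (a₀:ℤ)) ∣ l - 1 := dvd_of_nat ha₀mn' hl2
  have hb_l1 : (2 * (b₀:ℤ)) ∣ l + 1 := dvd_of_nat hb₀n' hl1
  have hb_k2 : (2 * (b₀:ℤ)) ∣ k - 1 := dvd_of_nat hb₀mn hk2
  have hd_k1 : (2 * (d:ℤ)) ∣ k + 1 := dvd_of_nat hdn hk1
  have hd_l1 : (2 * (d:ℤ)) ∣ l + 1 := dvd_of_nat hdn' hl1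
  have hc_k2 : (2 * (c:ℤ)) ∣ k - 1 := dvd_of_nat hcmn hk2
  have hc_l2 : (2 * (c:ℤ)) ∣ l - 1 := dvd_of_nat hcmn' hl2
  constructor
  · rw [hqab]
    refine aux_two_mul_coprime_dvd hab ?_ ?_
    · have : k*l + 1 = (k+1)*l - (l-1) := by ring
      rw [this]; exact dvd_sub (ha_k1.mul_right l) ha_l2
    · have : k*l + 1 = k*(l+1) - (k-1) := by ring
      rw [this]; exact dvd_sub (hb_l1.mul_left k) hb_k2
  · rw [hmq]
    refine aux_two_mul_coprime_dvd cop_dc ?_ ?_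
    · have : k*l - 1 = (k+1)*(l+1) - (k+1) - (l+1) := by ring
      rw [this]; exact dvd_sub (dvd_sub (hd_k1.mul_right (l+1)) hd_k1) hd_l1
    · have : k*l - 1 = (k-1)*(l-1) + (k-1) + (l-1) := by ring
      rw [this]; exact dvd_add (dvd_add (hc_k2.mul_right (l-1)) hc_k2) hc_l2

lemma aux_IsAOf_of_lift {m n : ℕ} (hm : 0 < m) (hnm : n ∣ m) {a : ZMod (2*m)} {k : ℤ}
    (hk : (k : ZMod (2*m)) = a) (h1 : (2*(n:ℤ)) ∣ k + 1) (h2 : (2*((m/n : ℕ):ℤ)) ∣ k - 1) :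
    IsAOf m n a := by
  intro k' hk'
  have hdd : (2*(m:ℤ)) ∣ k' - k := aux_dvd_of_cast_eq hm (by rw [hk, hk'])
  have hn2 : (2*(n:ℤ)) ∣ 2*(m:ℤ) := by exact_mod_cast Nat.mul_dvd_mul_left 2 hnm
  have hmn2 : (2*((m/n:ℕ):ℤ)) ∣ 2*(m:ℤ) := by
    exact_mod_cast Nat.mul_dvd_mul_left 2 (Nat.div_dvd_of_dvd hnm)
  constructor
  · have h3 : k' + 1 = (k' - k) + (k + 1) := by ring
    rw [h3]; exact dvd_add (dvd_trans hn2 hdd) h1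
  · have h3 : k' - 1 = (k' - k) + (k - 1) := by ring
    rw [h3]; exact dvd_add (dvd_trans hmn2 hdd) h2

lemma aux_IsOm_of_lift {m : ℕ} (hm : 0 < m) {a : ZMod (2*m)} {k : ℤ}
    (hk : (k : ZMod (2*m)) = a) (h : (4*(m:ℤ)) ∣ k^2 - 1) : IsOm m a := by
  intro k' hk'
  obtain ⟨t, ht⟩ := aux_dvd_of_cast_eq hm (show ((k':ℤ):ZMod (2*m)) = k by rw [hk, hk'])
  have hk'eq : k' = k + 2*m*t := by linarith
  have h2 : k'^2 - 1 = (k^2 - 1) + 4*m*(t*(m*t + k)) := by rw [hk'eq]; ring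
  rw [h2]
  exact dvd_add h ⟨t*(m*t+k), by ring⟩

lemma aux_aOf_exists {m n : ℕ} (hm : 0 < m) (hn : IsExactDivisor m n) :
    ∃ a : ZMod (2*m), IsAOf m n a := by
  obtain ⟨hn0, hnm, hnc⟩ := hn
  have hcop : IsCoprime (n:ℤ) ((m/n : ℕ):ℤ) := Nat.isCoprime_iff_coprime.mpr hnc
  obtain ⟨u, v, huv⟩ := hcop
  refine ⟨((2*(n:ℤ)*u - 1 : ℤ) : ZMod (2*m)), aux_IsAOf_of_lift hm hnm rfl ?_ ?_⟩
  · exact ⟨u, by ring⟩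
  · exact ⟨-v, by linear_combination 2*huv⟩

lemma aux_aOf_unique {m n : ℕ} (hm : 0 < m) (hn : IsExactDivisor m n)
    {a b : ZMod (2*m)} (ha : IsAOf m n a) (hb : IsAOf m n b) : a = b := by
  obtain ⟨hn0, hnm, hnc⟩ := hn
  have hka := ha _ (aux_cast_val hm a)
  have hkb := hb _ (aux_cast_val hm b)
  have h1 : (2*(n:ℤ)) ∣ (a.val:ℤ) - (b.val:ℤ) := by
    have h3 : (a.val:ℤ) - (b.val:ℤ) = ((a.val:ℤ) + 1) - ((b.val:ℤ) + 1) := by ring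
    rw [h3]; exact dvd_sub hka.1 hkb.1
  have h2 : (2*((m/n:ℕ):ℤ)) ∣ (a.val:ℤ) - (b.val:ℤ) := by
    have h3 : (a.val:ℤ) - (b.val:ℤ) = ((a.val:ℤ) - 1) - ((b.val:ℤ) - 1) := by ring
    rw [h3]; exact dvd_sub hka.2 hkb.2
  have h3 := aux_two_mul_coprime_dvd hnc h1 h2
  rw [Nat.mul_div_cancel' hnm] at h3
  have h4 := aux_cast_eq_of_dvd hm h3
  rw [aux_cast_val hm a, aux_cast_val hm b] at h4
  exact h4

lemma aux_exMul_eq_one {n n' : ℕ} (h0 : 0 < n) (h0' : 0 < n') (h : exMul n n' = 1) : n = n' := by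
  set g := Nat.gcd n n' with hg
  have hg0 : 0 < g := Nat.gcd_pos_of_pos_left n' h0
  set A := n / g with hA'
  set B := n' / g with hB'
  have hA : n = g * A := (Nat.mul_div_cancel' (Nat.gcd_dvd_left n n')).symm
  have hB : n' = g * B := (Nat.mul_div_cancel' (Nat.gcd_dvd_right n n')).symm
  have hdvd : g^2 ∣ n * n' := by
    rw [pow_two]; exact mul_dvd_mul (Nat.gcd_dvd_left n n') (Nat.gcd_dvd_right n n')
  have h1 : n * n' = g^2 := by
    have h2 := Nat.div_mul_cancel hdvd
    rw [show n * n' / g^2 = exMul n n' from rfl, h, one_mul] at h2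
    exact h2.symm
  have h3 : g^2 * (A*B) = g^2 * 1 := by
    rw [mul_one]
    calc g^2 * (A*B) = (g*A) * (g*B) := by ring
      _ = n * n' := by rw [← hA, ← hB]
      _ = g^2 := h1
  have h4 : A * B = 1 := Nat.eq_of_mul_eq_mul_left (pow_pos hg0 2) h3
  have hA1 : A = 1 := Nat.eq_one_of_mul_eq_one_right h4
  have hB1 : B = 1 := Nat.eq_one_of_mul_eq_one_left h4
  rw [hA, hB, hA1, hB1]

/-- `Ex_m` and `O_m` are groups, `a(n)` is well defined, lies in `O_m`,
and `n ↦ a(n)` is a group isomorphism `Ex_m ≅ O_m`. -/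
theorem exactDivisors_iso_Om (m : ℕ) (hm : 0 < m) :
    -- (1) Ex_m is a group under ∗ with identity 1
    ((∀ n n', IsExactDivisor m n → IsExactDivisor m n' → IsExactDivisor m (exMul n n')) ∧
     (∀ n n' n'', IsExactDivisor m n → IsExactDivisor m n' → IsExactDivisor m n'' →
        exMul (exMul n n') n'' = exMul n (exMul n' n'')) ∧
     IsExactDivisor m 1 ∧
     (∀ n, IsExactDivisor m n → exMul 1 n = n ∧ exMul n 1 = n) ∧
     (∀ n, IsExactDivisor m n → ∃ n', IsExactDivisor m n' ∧ exMul n n' = 1 ∧ exMul n' n = 1)) ∧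
    -- (2) O_m is a group under multiplication in ZMod (2m)
    ((∀ a b : ZMod (2 * m), IsOm m a → IsOm m b → IsOm m (a * b)) ∧
     IsOm m 1 ∧
     (∀ a : ZMod (2 * m), IsOm m a → ∃ b : ZMod (2 * m), IsOm m b ∧ a * b = 1 ∧ b * a = 1)) ∧
    -- (3) existence and uniqueness of a(n)
    (∀ n, IsExactDivisor m n → ∃! a : ZMod (2 * m), IsAOf m n a) ∧
    -- (4) a(n) ∈ O_m
    (∀ n a, IsExactDivisor m n → IsAOf m n a → IsOm m a) ∧
    -- (5) n ↦ a(n) is a group isomorphism from (Ex_m, ∗) onto (O_m, ·):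
    --     injective, surjective onto O_m, and multiplicative
    ((∀ n n' a, IsExactDivisor m n → IsExactDivisor m n' →
        IsAOf m n a → IsAOf m n' a → n = n') ∧
     (∀ a : ZMod (2 * m), IsOm m a → ∃ n, IsExactDivisor m n ∧ IsAOf m n a) ∧
     (∀ n n' a b c, IsExactDivisor m n → IsExactDivisor m n' →
        IsAOf m n a → IsAOf m n' b → IsAOf m (exMul n n') c → c = a * b)) := by
    -- (4)
  have hPart4 : ∀ n a, IsExactDivisor m n → IsAOf m n a → IsOm m a := by
    intro n a hn ha k hk
    obtain ⟨h1, h2⟩ := ha k hk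
    have h3 := mul_dvd_mul h1 h2
    have hmn : n * (m / n) = m := Nat.mul_div_cancel' hn.2.1
    have hmnz : (n:ℤ) * ((m/n:ℕ):ℤ) = (m:ℤ) := by exact_mod_cast hmn
    have heq : (2*(n:ℤ))*(2*((m/n:ℕ):ℤ)) = 4*(m:ℤ) := by rw [← hmnz]; ring
    rw [heq] at h3
    rw [show k^2 - 1 = (k+1)*(k-1) by ring]
    exact h3
  -- square of Om element is 1
  have hSq : ∀ a : ZMod (2*m), IsOm m a → a * a = 1 := by
    intro a ha
    have hka := ha _ (aux_cast_val hm a)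
    have h24 : (2*(m:ℤ)) ∣ 4*(m:ℤ) := ⟨2, by ring⟩
    have h2 : (2*(m:ℤ)) ∣ (a.val:ℤ)*(a.val:ℤ) - 1 :=
      dvd_trans h24 (by rw [show (a.val:ℤ)*(a.val:ℤ) = (a.val:ℤ)^2 by ring]; exact hka)
    have h3 := aux_cast_eq_of_dvd hm h2
    rw [Int.cast_mul, aux_cast_val hm a, Int.cast_one] at h3
    exact h3
  -- (5c) multiplicativity
  have hMulc : ∀ n n' (a b c : ZMod (2*m)), IsExactDivisor m n → IsExactDivisor m n' →
      IsAOf m n a → IsAOf m n' b → IsAOf m (exMul n n') c → c = a * b := by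
    intro n n' a b c hn hn' ha hb hc
    have hka := ha _ (aux_cast_val hm a)
    have hkb := hb _ (aux_cast_val hm b)
    have key := (aux_exMul_key hm hn hn').2 _ _ hka.1 hka.2 hkb.1 hkb.2
    have hq := (aux_exMul_key hm hn hn').1
    have hab : IsAOf m (exMul n n') (a*b) := by
      refine aux_IsAOf_of_lift hm hq.2.1 (k := (a.val:ℤ)*(b.val:ℤ)) ?_ key.1 key.2
      rw [Int.cast_mul, aux_cast_val hm a, aux_cast_val hm b]
    exact aux_aOf_unique hm hq hc hab
  -- (5a) injectivity
  have hInj : ∀ n n' a, IsExactDivisor m n → IsExactDivisor m n' →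
      IsAOf m n a → IsAOf m n' a → n = n' := by
    intro n n' a hn hn' ha ha'
    have hq := (aux_exMul_key hm hn hn').1
    obtain ⟨c, hc⟩ := aux_aOf_exists hm hq
    have h1 : c = 1 := by
      rw [hMulc n n' a a c hn hn' ha ha' hc]
      exact hSq a (hPart4 n a hn ha)
    rw [h1] at hc
    have h2 := hc 1 (by push_cast; ring)
    have h3 : (2*((exMul n n' : ℕ):ℤ)) ∣ 2*1 := by simpa using h2.1
    have h4 : ((exMul n n' : ℕ):ℤ) ∣ 1 := (mul_dvd_mul_iff_left (two_ne_zero (α := ℤ))).mp h3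
    have h5 : exMul n n' = 1 := Nat.dvd_one.mp (by exact_mod_cast h4)
    exact aux_exMul_eq_one hn.1 hn'.1 h5
  -- associativity
  have hAssoc : ∀ n n' n'', IsExactDivisor m n → IsExactDivisor m n' → IsExactDivisor m n'' →
      exMul (exMul n n') n'' = exMul n (exMul n' n'') := by
    intro n n' n'' h1 h2 h3
    have q1 := (aux_exMul_key hm h1 h2).1
    have q2 := (aux_exMul_key hm h2 h3).1
    have Q1 := (aux_exMul_key hm q1 h3).1
    have Q2 := (aux_exMul_key hm h1 q2).1
    obtain ⟨a, ha⟩ := aux_aOf_exists hm h1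
    obtain ⟨b, hb⟩ := aux_aOf_exists hm h2
    obtain ⟨c, hc⟩ := aux_aOf_exists hm h3
    obtain ⟨x, hx⟩ := aux_aOf_exists hm q1
    obtain ⟨y, hy⟩ := aux_aOf_exists hm q2
    obtain ⟨X, hX⟩ := aux_aOf_exists hm Q1
    obtain ⟨Y, hY⟩ := aux_aOf_exists hm Q2
    have hXx : X = x * c := hMulc _ _ _ _ _ q1 h3 hx hc hX
    have hYy : Y = a * y := hMulc _ _ _ _ _ h1 q2 ha hy hY
    have hxab : x = a * b := hMulc _ _ _ _ _ h1 h2 ha hb hx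
    have hybc : y = b * c := hMulc _ _ _ _ _ h2 h3 hb hc hy
    have hXY : Y = X := by rw [hXx, hYy, hxab, hybc, mul_assoc]
    exact hInj _ _ X Q1 Q2 hX (hXY ▸ hY)
  -- (5b) surjectivity
  have hSurj : ∀ a : ZMod (2*m), IsOm m a → ∃ n, IsExactDivisor m n ∧ IsAOf m n a := by
    intro a ha
    have hk : ((a.val:ℤ) : ZMod (2*m)) = a := aux_cast_val hm a
    have h4 := ha _ hk
    rcases Int.even_or_odd (a.val:ℤ) with ⟨j, hj⟩ | ⟨j, hj⟩
    · exfalso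
      have h4' : (4:ℤ) ∣ (a.val:ℤ)^2 - 1 := dvd_trans ⟨(m:ℤ), by ring⟩ h4
      obtain ⟨t, ht⟩ := h4'
      rw [hj, show (j+j)^2 - 1 = 4*(j*j) - 1 by ring] at ht
      set w := j * j
      omega
    · have hmjt : (m:ℤ) ∣ j*(j+1) := by
        obtain ⟨t, h5⟩ := h4
        refine ⟨t, by nlinarith [h5, hj]⟩
      have hST : Nat.Coprime j.natAbs (j+1).natAbs := by
        have hco : IsCoprime j (j+1) := ⟨-1, 1, by ring⟩
        exact Int.isCoprime_iff_gcd_eq_one.mp hco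
      have hmST : m ∣ j.natAbs * (j+1).natAbs := by
        have h6 := Int.natCast_dvd.mp hmjt
        rwa [Int.natAbs_mul] at h6
      set g := Nat.gcd m j.natAbs with hgd
      have hgm : g ∣ m := Nat.gcd_dvd_left m j.natAbs
      have hgS : g ∣ j.natAbs := Nat.gcd_dvd_right m j.natAbs
      have hg0 : 0 < g := Nat.gcd_pos_of_pos_left j.natAbs hm
      set n := m / g with hnd
      have hnm : n ∣ m := Nat.div_dvd_of_dvd hgm
      have hn0 : 0 < n := Nat.div_pos (Nat.le_of_dvd hm hgm) hg0
      have hmng : m / n = g := Nat.div_div_self hgm hm.ne'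
      have hnT : n ∣ (j+1).natAbs := by
        have h8 : g * n ∣ g * ((j.natAbs / g) * (j+1).natAbs) := by
          rw [Nat.mul_div_cancel' hgm,
            show g * ((j.natAbs / g) * (j+1).natAbs) = (g * (j.natAbs / g)) * (j+1).natAbs by ring,
            Nat.mul_div_cancel' hgS]
          exact hmST
        have h7 := (Nat.mul_dvd_mul_iff_left hg0).mp h8
        exact (Nat.coprime_div_gcd_div_gcd (m := m) (n := j.natAbs) hg0).dvd_of_dvd_mul_left h7
      have hexact : IsExactDivisor m n := by
        refine ⟨hn0, hnm, ?_⟩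
        rw [hmng]
        exact Nat.Coprime.coprime_dvd_right hgS
          (Nat.Coprime.coprime_dvd_left hnT hST.symm)
      refine ⟨n, hexact, aux_IsAOf_of_lift hm hnm hk ?_ ?_⟩
      · obtain ⟨w, hw⟩ := Int.natCast_dvd.mpr hnT
        exact ⟨w, by rw [hj]; linear_combination 2*hw⟩
      · rw [hmng]
        obtain ⟨w, hw⟩ := Int.natCast_dvd.mpr hgS
        exact ⟨w, by rw [hj]; linear_combination 2*hw⟩
  refine ⟨⟨fun n n' h h' => (aux_exMul_key hm h h').1, hAssoc, ?_, ?_, ?_⟩,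
    ⟨?_, ?_, fun a ha => ⟨a, ha, hSq a ha, hSq a ha⟩⟩,
    fun n hn => ?_, hPart4, hInj, hSurj, hMulc⟩
  · exact ⟨one_pos, one_dvd m, by simp⟩
  · intro n hn
    constructor
    · rw [exMul, Nat.gcd_one_left]; simp
    · rw [exMul, Nat.gcd_one_right]; simp
  · intro n hn
    refine ⟨n, hn, ?_, ?_⟩ <;>
      · rw [exMul, Nat.gcd_self, ← pow_two, Nat.div_self (pow_pos hn.1 2)]
  · -- Om closed under multiplication
    intro a b ha hb
    have hka := ha _ (aux_cast_val hm a)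
    have hkb := hb _ (aux_cast_val hm b)
    refine aux_IsOm_of_lift hm (k := (a.val:ℤ)*(b.val:ℤ)) ?_ ?_
    · rw [Int.cast_mul, aux_cast_val hm a, aux_cast_val hm b]
    · rw [show ((a.val:ℤ)*(b.val:ℤ))^2 - 1
          = (a.val:ℤ)^2*((b.val:ℤ)^2-1) + ((a.val:ℤ)^2-1) by ring]
      exact dvd_add (hkb.mul_left _) hka
  · -- IsOm m 1
    intro k hk
    have h1 : (2*(m:ℤ)) ∣ k - 1 := aux_dvd_of_cast_eq hm (by rw [hk]; push_cast; ring)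
    obtain ⟨t, ht⟩ := h1
    exact ⟨t*(m*t+1), by rw [show k = 2*m*t+1 by linarith]; ring⟩
  · -- (3)
    obtain ⟨a, ha⟩ := aux_aOf_exists hm hn
    exact ⟨a, ha, fun b hb => aux_aOf_unique hm hn hb ha⟩
end

section
/- Let m be a positive integer and r an integer, and for τ in the upper half-plane ℍ and z ∈ ℂ define the theta function θ_{m,r}(τ, z) = Σ_{ℓ ∈ ℤ, ℓ ≡ r (mod 2m)} exp(2πiτ ℓ²/(4m)) · exp(2πi z ℓ). Then for all τ ∈ ℍ and z ∈ ℂ, θ_{m,r}(−1/τ, z/τ) = √(−iτ) · exp(2πi m z²/τ) · (1/√(2m)) · Σ_{r' = 0}^{2m−1} exp(−2πi r r'/(2m)) · θ_{m,r'}(τ, z), where √(−iτ) denotes the principal branch of the square root (note −iτ has positive real part when τ ∈ ℍ). -/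
/-!
Substituting `ℓ = r + 2m n` writes `θ_{m,r}(τ, z)` as `q^{r²/4m} ζ^r ϑ(rτ + 2mz, 2mτ)`, where
`q = e^{2πiτ}`, `ζ = e^{2πiz}` and `ϑ` is Jacobi's two-variable theta function, while the finite
Fourier transform over the residue classes mod `2m` reassembles the `θ_{m,r'}(τ, z)` into
`ϑ(z - r/2m, τ/2m)`. Put `σ = τ/2m` and `w = z - r/2m`: under `(τ, z) ↦ (-1/τ, z/τ)` the arguments
of the first `ϑ` become `(w/σ, -1/σ)`, so Jacobi's functional equation for `ϑ` links the two
sides, and `(-iτ)^{1/2} = √(2m) (-iσ)^{1/2}` produces the factor `1/√(2m)`.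
-/

open Complex

/-- The index-`m` Jacobi theta function attached to the residue class `r mod 2m`:
`θ_{m,r}(τ,z) = Σ_{ℓ ≡ r (2m)} q^{ℓ²/4m} y^ℓ`. -/
noncomputable def jacobiThetaMR (m : ℕ) (r : ℤ) (τ z : ℂ) : ℂ :=
  ∑' ℓ : ℤ, if (ℓ : ZMod (2 * m)) = (r : ZMod (2 * m)) then
      Complex.exp (2 * Real.pi * Complex.I * τ * (ℓ : ℂ) ^ 2 / (4 * m)) *
        Complex.exp (2 * Real.pi * Complex.I * z * (ℓ : ℂ))
    else 0

open scoped Real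

lemma Complex.ofReal_mul_cpow_of_pos {c : ℝ} (hc : 0 < c) (x y : ℂ) :
    ((c : ℂ) * x) ^ y = (c : ℂ) ^ y * x ^ y := by
  have hc' : (c : ℂ) ≠ 0 := ofReal_ne_zero.mpr hc.ne'
  rcases eq_or_ne x 0 with rfl | hx
  · rcases eq_or_ne y 0 with rfl | hy <;> simp [*]
  rw [cpow_def_of_ne_zero (mul_ne_zero hc' hx), cpow_def_of_ne_zero hc', cpow_def_of_ne_zero hx,
    log_ofReal_mul hc hx, add_mul, exp_add, ofReal_log hc.le]

lemma Finset.sum_range_natCast_zmod {M : Type*} [AddCommMonoid M] (N : ℕ) [NeZero N]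
    (h : ZMod N → M) : ∑ a ∈ Finset.range N, h a = ∑ x : ZMod N, h x :=
  Finset.sum_nbij' Nat.cast ZMod.val (by simp) (by simp [ZMod.val_lt])
    (fun a ha => ZMod.val_cast_of_lt (Finset.mem_range.mp ha))
    (fun x _ => ZMod.natCast_zmod_val x) (fun _ _ => rfl)

lemma tsum_ite_intCast_eq_tsum_add_mul {M : Type*} [AddCommMonoid M] [TopologicalSpace M]
    (N : ℕ) [NeZero N] (r : ℤ) (f : ℤ → M) :
    ∑' ℓ : ℤ, (if (ℓ : ZMod N) = r then f ℓ else 0) = ∑' n : ℤ, f (r + N * n) := by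
  have hinj : Function.Injective (fun n : ℤ => r + N * n) := fun a b h =>
    mul_left_cancel₀ (Int.natCast_ne_zero.mpr (NeZero.ne N)) (add_left_cancel h)
  have hsupp : Function.support (fun ℓ : ℤ => if (ℓ : ZMod N) = r then f ℓ else 0) ⊆
      Set.range (fun n : ℤ => r + N * n) := by
    intro ℓ hℓ
    obtain ⟨hc, -⟩ : (ℓ : ZMod N) = r ∧ f ℓ ≠ 0 := by simpa using hℓ
    obtain ⟨k, hk⟩ := (ZMod.intCast_eq_intCast_iff_dvd_sub ℓ r N).mp hc
    exact ⟨-k, by linarith⟩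
  rw [← hinj.tsum_eq hsupp]
  congr 1 with n
  simp

lemma sum_zmod_mul_tsum_ite_intCast_eq {R : Type*} [NormedRing R] [CompleteSpace R]
    {N : ℕ} [NeZero N] (g : ZMod N → R) {f : ℤ → R} (hf : Summable f) :
    ∑ a : ZMod N, g a * ∑' ℓ : ℤ, (if (ℓ : ZMod N) = a then f ℓ else 0) =
      ∑' ℓ : ℤ, g ℓ * f ℓ := by
  have hsummable (a : ZMod N) : Summable fun ℓ : ℤ => if (ℓ : ZMod N) = a then f ℓ else 0 :=
    (hf.indicator {ℓ : ℤ | (ℓ : ZMod N) = a}).congr fun ℓ => by simp [Set.indicator_apply]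
  simp_rw [← (hsummable _).tsum_mul_left]
  rw [← Summable.tsum_finsetSum fun a _ => (hsummable a).mul_left (g a)]
  congr 1 with ℓ
  simp [mul_ite]

lemma jacobiTheta₂_term_add_mul (r N n : ℤ) (z τ : ℂ) :
    jacobiTheta₂_term (r + N * n) z τ =
      jacobiTheta₂_term r z τ * jacobiTheta₂_term n (N * z + r * N * τ) (N ^ 2 * τ) := by
  simp only [jacobiTheta₂_term, ← exp_add]
  push_cast
  ring_nf

lemma jacobiTheta₂_term_sub (n : ℤ) (z w τ : ℂ) :
    jacobiTheta₂_term n (z - w) τ = exp (-(2 * π * I * n * w)) * jacobiTheta₂_term n z τ := by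
  simp only [jacobiTheta₂_term, ← exp_add]
  ring_nf

lemma jacobiThetaMR_eq_tsum_ite (m : ℕ) (r : ℤ) (τ z : ℂ) :
    jacobiThetaMR m r τ z = ∑' ℓ : ℤ,
      if (ℓ : ZMod (2 * m)) = r then jacobiTheta₂_term ℓ z (τ / (2 * m)) else 0 := by
  rcases eq_or_ne m 0 with rfl | hm
  · simp [jacobiThetaMR, jacobiTheta₂_term, mul_comm, mul_left_comm]
  rw [jacobiThetaMR]
  congr 1 with ℓ
  simp only [jacobiTheta₂_term, ← exp_add]
  congr 2
  field_simp
  ring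

lemma jacobiThetaMR_eq_mul_jacobiTheta₂ {m : ℕ} (hm : m ≠ 0) (r : ℤ) (τ z : ℂ) :
    jacobiThetaMR m r τ z =
      jacobiTheta₂_term r z (τ / (2 * m)) * jacobiTheta₂ (r * τ + 2 * m * z) (2 * m * τ) := by
  have : NeZero (2 * m) := ⟨by positivity⟩
  rw [jacobiThetaMR_eq_tsum_ite, tsum_ite_intCast_eq_tsum_add_mul, jacobiTheta₂,
    ← tsum_mul_left]
  congr 1 with n
  rw [jacobiTheta₂_term_add_mul]
  congr 2
  · push_cast; field_simp; ring
  · push_cast; field_simp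

open Finset in
lemma sum_range_exp_mul_jacobiThetaMR {m : ℕ} (hm : m ≠ 0) (r : ℤ) {τ : ℂ} (z : ℂ)
    (hτ : 0 < τ.im) :
    ∑ r' ∈ range (2 * m), exp (-(2 * π * I * r * r') / (2 * m)) * jacobiThetaMR m (r' : ℤ) τ z =
      jacobiTheta₂ (z - r / (2 * m)) (τ / (2 * m)) := by
  have : NeZero (2 * m) := ⟨by positivity⟩
  have hσ : 0 < (τ / (2 * m)).im := by
    rw [show (2 * m : ℂ) = ((2 * m : ℝ) : ℂ) by push_cast; rfl, div_ofReal_im]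
    positivity
  -- `e(-r j / 2m)` only depends on `j mod 2m`, so it is a character of `ZMod (2 * m)`.
  have hchar (j : ℤ) : exp (-(2 * π * I * r * j) / (2 * m)) =
      ZMod.toCircle (-(r : ZMod (2 * m)) * (j : ZMod (2 * m))) := by
    rw [← Int.cast_neg, ← Int.cast_mul, ZMod.toCircle_intCast]
    push_cast
    ring_nf
  let F (a : ZMod (2 * m)) : ℂ := ZMod.toCircle (-(r : ZMod (2 * m)) * a) *
    ∑' ℓ : ℤ, if (ℓ : ZMod (2 * m)) = a then jacobiTheta₂_term ℓ z (τ / (2 * m)) else 0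
  have hsummand (r' : ℕ) :
      exp (-(2 * π * I * r * r') / (2 * m)) * jacobiThetaMR m r' τ z = F r' := by
    rw [jacobiThetaMR_eq_tsum_ite, ← Int.cast_natCast, hchar]
    push_cast
    rfl
  rw [sum_congr rfl fun r' _ => hsummand r', sum_range_natCast_zmod (2 * m) F]
  rw [sum_zmod_mul_tsum_ite_intCast_eq _ ((summable_jacobiTheta₂_term_iff _ _).mpr hσ)]
  congr 1 with ℓ
  rw [jacobiTheta₂_term_sub, ← hchar]
  congr 2
  ring

/-- the S-transformation of the vector-valued theta functions
realizing the index-`m` Weil representation. -/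
theorem jacobiThetaMR_S_transform (m : ℕ) (hm : 0 < m) (r : ℤ) (τ z : ℂ)
    (hτ : 0 < τ.im) :
    jacobiThetaMR m r (-1 / τ) (z / τ) =
      (-Complex.I * τ) ^ ((1 : ℂ) / 2) *
        Complex.exp (2 * Real.pi * Complex.I * m * z ^ 2 / τ) *
        ((1 : ℂ) / Real.sqrt (2 * m)) *
        ∑ r' ∈ Finset.range (2 * m),
          Complex.exp (-(2 * Real.pi * Complex.I * r * r') / (2 * m)) *
            jacobiThetaMR m (r' : ℤ) τ z := by
  have hτ0 : τ ≠ 0 := by rintro rfl; simp at hτ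
  have hm0 : (m : ℂ) ≠ 0 := Nat.cast_ne_zero.mpr hm.ne'
  set σ : ℂ := τ / (2 * m)
  set w : ℂ := z - r / (2 * m)
  have hz : (r : ℂ) * (-1 / τ) + 2 * m * (z / τ) = w / σ := by
    simp only [σ, w]; field_simp; ring
  have hτ' : 2 * (m : ℂ) * (-1 / τ) = -1 / σ := by
    simp only [σ]; field_simp
  have hsqrt : (-I * τ) ^ (1 / 2 : ℂ) = Real.sqrt (2 * m) * (-I * σ) ^ (1 / 2 : ℂ) := by
    rw [show -I * τ = ((2 * m : ℝ) : ℂ) * (-I * σ) by push_cast; simp only [σ]; field_simp,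
      ofReal_mul_cpow_of_pos (by positivity),
      Real.sqrt_eq_rpow, ofReal_cpow (by positivity)]
    norm_num
  have hexp : jacobiTheta₂_term r (z / τ) (-1 / τ / (2 * m)) =
      exp (2 * π * I * m * z ^ 2 / τ) * exp (-π * I * w ^ 2 / σ) := by
    rw [jacobiTheta₂_term, ← exp_add]
    congr 1
    simp only [σ, w]; field_simp; ring
  rw [jacobiThetaMR_eq_mul_jacobiTheta₂ hm.ne', hz, hτ',
    sum_range_exp_mul_jacobiThetaMR hm.ne' r z hτ, jacobiTheta₂_functional_equation w σ, hsqrt,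
    hexp]
  have hroot : (-I * σ) ^ (1 / 2 : ℂ) ≠ 0 := by simp [σ, hτ0, hm0]
  have hsqrt0 : (Real.sqrt (2 * m) : ℂ) ≠ 0 := by simp [hm.ne']
  generalize (-I * σ) ^ (1 / 2 : ℂ) = ρ at hroot ⊢
  field_simp
end

section
/- Let m, r, n be integers with 0 < r < m and n ≥ 1, let k be a real number, and set z_n = 2π n²/(4m) = π n²/(2m). Consider the function f(z) = (e^{iπ/4}/2) · (π z)^{−1/2} · sin((m − r)·(2π z/m)^{1/2}) / sin(m·(2π z/m)^{1/2}) · e^{−i k z}, where all square roots are principal branches (well defined for z in a punctured neighborhood of z_n inside ℂ ∖ (−∞, 0]). Then lim_{z → z_n, z ≠ z_n} (z − z_n) · f(z) = −(e^{iπ/4}/(π √(2m))) · sin(r π n/m) · e^{−2πi k n²/(4m)}; in particular f has at worst a simple pole at z_n with this residue. -/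
/-!
The point `z_n` is a simple zero of the denominator `sin (m √(2πz/m))`: there
`√(2πz_n/m) = πn/m =: w`, so `m w = nπ`, and the derivative is `cos (nπ) · m / n ≠ 0`.
All other factors are holomorphic near `z_n > 0`, so the limit is the numerator at `z_n`
divided by that derivative. Since `sin (m w) = 0`, the numerator factor
`sin ((m - r) w) = -cos (nπ) sin (r w)`, and the sign `cos (nπ)` cancels.
-/

open Complex Topology Filter

theorem tendsto_sub_mul_div_of_hasDerivAt {𝕜 : Type*} [NontriviallyNormedField 𝕜]
    {f g : 𝕜 → 𝕜} {a g' : 𝕜} (hf : ContinuousAt f a) (hg : HasDerivAt g g' a)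
    (hga : g a = 0) (hg' : g' ≠ 0) :
    Tendsto (fun z => (z - a) * (f z / g z)) (𝓝[≠] a) (𝓝 (f a / g')) := by
  refine (hf.continuousWithinAt.tendsto.div (hasDerivAt_iff_tendsto_slope.mp hg) hg').congr
    fun z => ?_
  rw [Pi.div_apply, slope_def_field, hga, sub_zero, div_div_eq_mul_div, mul_comm, mul_div_assoc]

theorem Complex.ofReal_sq_mem_slitPlane {w : ℝ} (hw : w ≠ 0) : (w : ℂ) ^ 2 ∈ slitPlane := by
  rw [← ofReal_pow]
  exact ofReal_mem_slitPlane.2 (by positivity)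

theorem HasDerivAt.cpow_one_div_two_of_eq_sq {u : ℂ → ℂ} {u' a : ℂ} {w : ℝ}
    (hu : HasDerivAt u u' a) (hw : 0 < w) (hua : u a = (w : ℂ) ^ 2) :
    HasDerivAt (fun z => u z ^ (1 / 2 : ℂ)) (u' / (2 * w)) a := by
  have hw0 : (w : ℂ) ≠ 0 := by exact_mod_cast hw.ne'
  convert hu.cpow_const (hua ▸ ofReal_sq_mem_slitPlane hw.ne') using 1
  rw [hua, cpow_sub _ _ (pow_ne_zero 2 hw0), cpow_one, one_div, sq_cpow_two_inv (by simpa)]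
  field_simp

theorem Complex.sin_sub_of_sin_eq_zero {x : ℂ} (hx : sin x = 0) (y : ℂ) :
    sin (x - y) = -(cos x * sin y) := by
  rw [sin_sub, hx, zero_mul, zero_sub]

theorem Complex.cos_ne_zero_of_sin_eq_zero {x : ℂ} (hx : sin x = 0) : cos x ≠ 0 := by
  intro hc
  simpa [hx, hc] using sin_sq_add_cos_sq x

section Pole

variable {m : ℤ}

theorem two_pi_mul_pole_div (n : ℤ) (hm : (m : ℝ) ≠ 0) :
    2 * (Real.pi : ℂ) * ((Real.pi * n ^ 2 / (2 * m) : ℝ) : ℂ) / m =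
      ((Real.pi * n / m : ℝ) : ℂ) ^ 2 := by
  have hmC : (m : ℂ) ≠ 0 := by exact_mod_cast hm
  push_cast
  field_simp

theorem pi_mul_pole (n : ℤ) (hm : (0 : ℝ) < m) :
    (Real.pi : ℂ) * ((Real.pi * n ^ 2 / (2 * m) : ℝ) : ℂ) =
      ((Real.pi * n / √(2 * m) : ℝ) : ℂ) ^ 2 := by
  have hsq : (√(2 * m) : ℂ) ^ 2 = 2 * m := by
    exact_mod_cast Real.sq_sqrt (by positivity : (0 : ℝ) ≤ 2 * m)
  have hmC : (m : ℂ) ≠ 0 := by exact_mod_cast hm.ne'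
  push_cast
  rw [div_pow, hsq]
  field_simp

theorem cpow_one_div_two_two_pi_mul_pole_div {n : ℤ} (hm : (0 : ℝ) < m) (hn : (0 : ℝ) < n) :
    (2 * (Real.pi : ℂ) * ((Real.pi * n ^ 2 / (2 * m) : ℝ) : ℂ) / m) ^ (1 / 2 : ℂ) =
      ((Real.pi * n / m : ℝ) : ℂ) := by
  rw [two_pi_mul_pole_div n hm.ne', one_div, sq_cpow_two_inv (by rw [ofReal_re]; positivity)]

theorem sin_mul_cpow_one_div_two_at_pole {n : ℤ} (hm : (0 : ℝ) < m) (hn : (0 : ℝ) < n) :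
    sin (m * (2 * Real.pi * ((Real.pi * n ^ 2 / (2 * m) : ℝ) : ℂ) / m) ^ (1 / 2 : ℂ)) =
      0 := by
  have hmC : (m : ℂ) ≠ 0 := by exact_mod_cast hm.ne'
  rw [cpow_one_div_two_two_pi_mul_pole_div hm hn,
    show (m : ℂ) * ((Real.pi * n / m : ℝ) : ℂ) = n * Real.pi by push_cast; field_simp]
  exact sin_int_mul_pi n

theorem hasDerivAt_sin_mul_cpow_one_div_two_at_pole {n : ℤ} (hm : (0 : ℝ) < m)
    (hn : (0 : ℝ) < n) :
    HasDerivAt (fun z : ℂ => sin (m * (2 * Real.pi * z / m) ^ (1 / 2 : ℂ)))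
      (cos (n * Real.pi) * m / n) ((Real.pi * n ^ 2 / (2 * m) : ℝ) : ℂ) := by
  have hmC : (m : ℂ) ≠ 0 := by exact_mod_cast hm.ne'
  have hnC : (n : ℂ) ≠ 0 := by exact_mod_cast hn.ne'
  have hu : HasDerivAt (fun z : ℂ => 2 * Real.pi * z / m) (2 * Real.pi / m)
      ((Real.pi * n ^ 2 / (2 * m) : ℝ) : ℂ) := by
    simpa using ((hasDerivAt_id' _).const_mul (2 * (Real.pi : ℂ))).div_const (m : ℂ)
  have hsqrt := hu.cpow_one_div_two_of_eq_sq (by positivity) (two_pi_mul_pole_div n hm.ne')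
  convert (hsqrt.const_mul (m : ℂ)).csin using 1
  rw [cpow_one_div_two_two_pi_mul_pole_div hm hn]
  push_cast
  field_simp

/-- `f z · sin (m √(2πz/m))`: the Borel transform with its vanishing denominator removed. -/
noncomputable def borelNumerator (m r : ℤ) (k : ℝ) (z : ℂ) : ℂ :=
  exp (Real.pi * I / 4) / 2 * (Real.pi * z) ^ (-(1 / 2 : ℂ)) *
    sin ((m - r) * (2 * Real.pi * z / m) ^ (1 / 2 : ℂ)) * exp (-I * k * z)

theorem continuousAt_borelNumerator (r : ℤ) (k : ℝ) {n : ℤ} (hm : (0 : ℝ) < m)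
    (hn : (0 : ℝ) < n) :
    ContinuousAt (borelNumerator m r k) ((Real.pi * n ^ 2 / (2 * m) : ℝ) : ℂ) := by
  have hπa := pi_mul_pole n hm ▸ ofReal_sq_mem_slitPlane (by positivity)
  have hua := two_pi_mul_pole_div n hm.ne' ▸ ofReal_sq_mem_slitPlane (by positivity)
  unfold borelNumerator
  fun_prop (disch := assumption)

theorem borelNumerator_pole (r : ℤ) (k : ℝ) {n : ℤ} (hm : (0 : ℝ) < m)
    (hn : (0 : ℝ) < n) :
    borelNumerator m r k ((Real.pi * n ^ 2 / (2 * m) : ℝ) : ℂ) =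
      -(exp (Real.pi * I / 4) / 2 * ((Real.pi * n / √(2 * m) : ℝ) : ℂ)⁻¹ *
        cos (n * Real.pi) * sin (r * Real.pi * n / m) *
        exp (-(2 * Real.pi * I * k * n ^ 2 / (4 * m)))) := by
  have hmC : (m : ℂ) ≠ 0 := by exact_mod_cast hm.ne'
  have harg : ((m : ℂ) - r) * ((Real.pi * n / m : ℝ) : ℂ) =
      n * Real.pi - r * Real.pi * n / m := by
    push_cast; field_simp
  have hka : -I * k * ((Real.pi * n ^ 2 / (2 * m) : ℝ) : ℂ) =
      -(2 * Real.pi * I * k * n ^ 2 / (4 * m)) := by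
    push_cast; field_simp; ring
  rw [borelNumerator, cpow_one_div_two_two_pi_mul_pole_div hm hn, harg,
    sin_sub_of_sin_eq_zero (sin_int_mul_pi n), hka, pi_mul_pole n hm, cpow_neg, one_div,
    sq_cpow_two_inv (by rw [ofReal_re]; positivity)]
  ring

end Pole

/-- residue of the Borel transform of `(1/√k)Ψ_{m,r}(1/k)` at the
pole `z_n = 2πn²/(4m)`; the residue is (up to normalization) the S-matrix entry
`−i/√(2m)·sin(rnπ/m)` times the non-perturbative exponential `e^{−2πik n²/4m}`. -/
theorem borel_transform_residue (m r n : ℤ) (hr : 0 < r) (hrm : r < m)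
    (hn : 1 ≤ n) (k : ℝ) :
    Tendsto
      (fun z : ℂ =>
        (z - ((Real.pi * (n : ℝ) ^ 2 / (2 * (m : ℝ)) : ℝ) : ℂ)) *
          ((Complex.exp ((Real.pi : ℂ) * Complex.I / 4) / 2) *
            ((Real.pi : ℂ) * z) ^ (-(1 / 2 : ℂ)) *
            (Complex.sin (((m : ℂ) - (r : ℂ)) *
                ((2 * (Real.pi : ℂ) * z / (m : ℂ)) ^ ((1 : ℂ) / 2))) /
              Complex.sin ((m : ℂ) *
                ((2 * (Real.pi : ℂ) * z / (m : ℂ)) ^ ((1 : ℂ) / 2)))) *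
            Complex.exp (-Complex.I * (k : ℂ) * z)))
      (𝓝[≠] (((Real.pi * (n : ℝ) ^ 2 / (2 * (m : ℝ)) : ℝ) : ℂ)))
      (𝓝 (-(Complex.exp ((Real.pi : ℂ) * Complex.I / 4) /
              ((Real.pi : ℂ) * (Real.sqrt (2 * (m : ℝ)) : ℂ))) *
            Complex.sin ((r : ℂ) * (Real.pi : ℂ) * (n : ℂ) / (m : ℂ)) *
            Complex.exp (-(2 * (Real.pi : ℂ) * Complex.I * (k : ℂ) * (n : ℂ) ^ 2 /
              (4 * (m : ℂ)))))) := by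
  have hm : (0 : ℝ) < m := by exact_mod_cast hr.trans hrm
  have hnR : (0 : ℝ) < n := by exact_mod_cast hn
  have hmC : (m : ℂ) ≠ 0 := by exact_mod_cast hm.ne'
  have hnC : (n : ℂ) ≠ 0 := by exact_mod_cast hnR.ne'
  have hcos : cos (n * Real.pi) ≠ 0 := cos_ne_zero_of_sin_eq_zero (sin_int_mul_pi n)
  convert tendsto_sub_mul_div_of_hasDerivAt (continuousAt_borelNumerator r k hm hnR)
    (hasDerivAt_sin_mul_cpow_one_div_two_at_pole hm hnR)
    (sin_mul_cpow_one_div_two_at_pole hm hnR) (by simp [hcos, hmC, hnC]) using 2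
  · simp only [borelNumerator]
    ring
  · have hsC : (√(2 * m) : ℂ) ≠ 0 := by
      exact_mod_cast (Real.sqrt_pos.2 (by positivity : (0 : ℝ) < 2 * m)).ne'
    have hsq : (√(2 * m) : ℂ) ^ 2 = 2 * m := by
      exact_mod_cast Real.sq_sqrt (by positivity : (0 : ℝ) ≤ 2 * m)
    rw [borelNumerator_pole r k hm hnR]
    generalize cos ((n : ℂ) * Real.pi) = c at hcos ⊢
    push_cast
    field_simp
    linear_combination sin ((Real.pi : ℂ) * r * n / m) * hsq
end

section
/- For all real numbers t > 0 and r > 0, ∫_{−∞}^{∞} e^{−π t y²} / (y − i r) dy = π i r · ∫_{0}^{∞} e^{−π r² u} / √(u + t) du, where both integrals converge absolutely. -/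
/-!
Since the Gaussian is even, replacing `y` by `-y` turns `1 / (y - i r)` into its even part
`i r / (y² + r²)`. Writing `1 / (y² + r²) = π ∫₀^∞ e^{-π (y² + r²) u} du` and exchanging the
order of integration leaves the Gaussian integral `∫ e^{-π (t + u) y²} dy = (u + t)^{-1/2}`.
-/

open Complex MeasureTheory Set

lemma abs_le_norm_ofReal_sub_I_mul (y r : ℝ) : |r| ≤ ‖(y : ℂ) - I * r‖ := by
  simpa using abs_im_le_norm ((y : ℂ) - I * r)

lemma ofReal_sub_I_mul_ne_zero (y : ℝ) {r : ℝ} (hr : r ≠ 0) : (y : ℂ) - I * r ≠ 0 :=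
  norm_pos_iff.mp ((abs_pos.mpr hr).trans_le (abs_le_norm_ofReal_sub_I_mul y r))

lemma MeasureTheory.Integrable.div_ofReal_sub_I_mul {g : ℝ → ℂ} (hg : Integrable g) {r : ℝ}
    (hr : r ≠ 0) :
    Integrable fun y : ℝ => g y / ((y : ℂ) - I * r) := by
  simp_rw [div_eq_mul_inv]
  refine hg.mul_bdd (c := |r|⁻¹) ?_ (.of_forall fun y => ?_)
  · exact (Continuous.inv₀ (by fun_prop) fun y =>
      ofReal_sub_I_mul_ne_zero y hr).aestronglyMeasurable
  · rw [norm_inv]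
    exact inv_anti₀ (abs_pos.mpr hr) (abs_le_norm_ofReal_sub_I_mul y r)

lemma inv_sub_I_mul_add_inv_neg_sub_I_mul {y r : ℝ} (hr : r ≠ 0) :
    ((y : ℂ) - I * r)⁻¹ + (-(y : ℂ) - I * r)⁻¹ = 2 * I * r / ((y ^ 2 + r ^ 2 : ℝ) : ℂ) := by
  have h₁ := ofReal_sub_I_mul_ne_zero y hr
  have h₂ : -(y : ℂ) - I * r ≠ 0 := by simpa using ofReal_sub_I_mul_ne_zero (-y) hr
  have h₃ : ((y ^ 2 + r ^ 2 : ℝ) : ℂ) = ((y : ℂ) - I * r) * (-(-(y : ℂ) - I * r)) := by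
    push_cast; ring_nf; rw [I_sq]; ring
  rw [h₃]
  field_simp
  ring

theorem integral_div_ofReal_sub_I_mul_of_even {g : ℝ → ℂ} (hg : Integrable g)
    (heven : ∀ y, g (-y) = g y) {r : ℝ} (hr : r ≠ 0) :
    ∫ y : ℝ, g y / ((y : ℂ) - I * r) = I * r * ∫ y : ℝ, g y / ((y ^ 2 + r ^ 2 : ℝ) : ℂ) := by
  have hint := hg.div_ofReal_sub_I_mul hr
  have hreflect : ∫ y : ℝ, g y / ((y : ℂ) - I * r) = ∫ y : ℝ, g y / (-(y : ℂ) - I * r) := by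
    rw [← integral_neg_eq_self]
    simp [heven]
  have hsum : 2 * ∫ y : ℝ, g y / ((y : ℂ) - I * r) =
      ∫ y : ℝ, 2 * I * r * (g y / ((y ^ 2 + r ^ 2 : ℝ) : ℂ)) := by
    have hint' : Integrable fun y : ℝ => g y / (-(y : ℂ) - I * r) := by
      simpa [heven] using hint.comp_neg
    rw [two_mul]
    nth_rw 2 [hreflect]
    rw [← integral_add hint hint']
    congr 1 with y
    rw [div_eq_mul_inv, div_eq_mul_inv, ← mul_add, inv_sub_I_mul_add_inv_neg_sub_I_mul hr]
    ring
  rw [integral_const_mul] at hsum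
  linear_combination hsum / 2

lemma integral_exp_neg_mul_Ioi_zero {b : ℝ} (hb : 0 < b) :
    ∫ u in Ioi (0 : ℝ), Real.exp (-(b * u)) = b⁻¹ := by
  simpa [neg_mul, div_neg, neg_div, one_div] using integral_exp_mul_Ioi (neg_neg_of_pos hb) 0

/-- For `u + t ≤ 0` both sides are junk zeros (`integral_gaussian` at a nonpositive rate,
`Real.sqrt` of a nonpositive number). -/
lemma integral_exp_neg_pi_mul_sq_mul_exp (t u r : ℝ) :
    ∫ y : ℝ, Real.exp (-(Real.pi * t * y ^ 2)) * Real.exp (-(Real.pi * (y ^ 2 + r ^ 2) * u)) =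
      Real.exp (-(Real.pi * r ^ 2 * u)) / √(u + t) := by
  have hsplit : ∀ y : ℝ,
      Real.exp (-(Real.pi * t * y ^ 2)) * Real.exp (-(Real.pi * (y ^ 2 + r ^ 2) * u)) =
        Real.exp (-(Real.pi * (u + t)) * y ^ 2) * Real.exp (-(Real.pi * r ^ 2 * u)) := fun y => by
    rw [← Real.exp_add, ← Real.exp_add]; ring_nf
  simp_rw [hsplit]
  rw [integral_mul_const, integral_gaussian, div_mul_cancel_left₀ Real.pi_ne_zero, Real.sqrt_inv,
    inv_mul_eq_div]

lemma integrable_exp_neg_pi_mul_sq_mul_exp_prod {t r : ℝ} (ht : 0 < t) (hr : r ≠ 0) :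
    Integrable (Function.uncurry fun y u : ℝ =>
        Real.exp (-(Real.pi * t * y ^ 2)) * Real.exp (-(Real.pi * (y ^ 2 + r ^ 2) * u)))
      (volume.prod (volume.restrict (Ioi 0))) := by
  have hdom := (integrable_exp_neg_mul_sq (mul_pos Real.pi_pos ht)).mul_prod
    (exp_neg_integrableOn_Ioi 0 (mul_pos Real.pi_pos (sq_pos_of_ne_zero hr)))
  simp only [neg_mul] at hdom
  refine hdom.mono' (by fun_prop) ?_
  filter_upwards [Measure.quasiMeasurePreserving_snd.ae (ae_restrict_mem measurableSet_Ioi)]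
    with ⟨y, u⟩ (hu : 0 < u)
  have hdecay : Real.exp (-(Real.pi * (y ^ 2 + r ^ 2) * u)) ≤ Real.exp (-(Real.pi * r ^ 2 * u)) :=
    Real.exp_le_exp.mpr (by nlinarith [mul_nonneg (mul_nonneg Real.pi_pos.le (sq_nonneg y)) hu.le])
  rw [Function.uncurry_apply_pair, Real.norm_of_nonneg (by positivity)]
  exact mul_le_mul_of_nonneg_left hdecay (Real.exp_nonneg _)

theorem integral_exp_neg_pi_mul_sq_div_sq_add_sq {t r : ℝ} (ht : 0 < t) (hr : r ≠ 0) :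
    ∫ y : ℝ, Real.exp (-(Real.pi * t * y ^ 2)) / (y ^ 2 + r ^ 2) =
      Real.pi * ∫ u in Ioi (0 : ℝ), Real.exp (-(Real.pi * r ^ 2 * u)) / √(u + t) := by
  have hinner (y : ℝ) : ∫ u in Ioi (0 : ℝ),
      Real.exp (-(Real.pi * t * y ^ 2)) * Real.exp (-(Real.pi * (y ^ 2 + r ^ 2) * u)) =
        Real.pi⁻¹ * (Real.exp (-(Real.pi * t * y ^ 2)) / (y ^ 2 + r ^ 2)) := by
    rw [integral_const_mul, integral_exp_neg_mul_Ioi_zero (by positivity)]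
    field_simp
  calc ∫ y : ℝ, Real.exp (-(Real.pi * t * y ^ 2)) / (y ^ 2 + r ^ 2)
      = Real.pi * ∫ y : ℝ, ∫ u in Ioi (0 : ℝ),
          Real.exp (-(Real.pi * t * y ^ 2)) * Real.exp (-(Real.pi * (y ^ 2 + r ^ 2) * u)) := by
        simp only [hinner, integral_const_mul]
        field_simp
    _ = Real.pi * ∫ u in Ioi (0 : ℝ), ∫ y : ℝ,
          Real.exp (-(Real.pi * t * y ^ 2)) * Real.exp (-(Real.pi * (y ^ 2 + r ^ 2) * u)) := by
        rw [integral_integral_swap (integrable_exp_neg_pi_mul_sq_mul_exp_prod ht hr)]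
    _ = Real.pi * ∫ u in Ioi (0 : ℝ), Real.exp (-(Real.pi * r ^ 2 * u)) / √(u + t) := by
        simp only [integral_exp_neg_pi_mul_sq_mul_exp]

lemma integrableOn_exp_neg_mul_div_sqrt_add {b t : ℝ} (hb : 0 < b) (ht : 0 < t) :
    IntegrableOn (fun u : ℝ => Real.exp (-(b * u)) / √(u + t)) (Ioi 0) := by
  have hexp := exp_neg_integrableOn_Ioi 0 hb
  simp_rw [neg_mul, div_eq_mul_inv] at hexp ⊢
  refine hexp.mul_bdd (c := (√t)⁻¹) (by fun_prop) ?_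
  filter_upwards [ae_restrict_mem measurableSet_Ioi] with u (hu : 0 < u)
  rw [norm_inv, Real.norm_of_nonneg (Real.sqrt_nonneg _)]
  exact inv_anti₀ (Real.sqrt_pos.mpr ht) (Real.sqrt_le_sqrt (by linarith))

/-- for `t, r > 0`,
`∫_{−∞}^{∞} e^{−πty²}/(y − ir) dy = πir ∫_0^∞ e^{−πr²u}/√(u+t) du`,
both integrals converging absolutely. -/
theorem gaussian_vs_eichler_integral (t r : ℝ) (ht : 0 < t) (hr : 0 < r) :
    Integrable (fun y : ℝ =>
      Complex.exp (-(Real.pi * t * y ^ 2 : ℝ)) / ((y : ℂ) - Complex.I * r)) ∧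
    IntegrableOn (fun u : ℝ =>
      Complex.exp (-(Real.pi * r ^ 2 * u : ℝ)) / (Real.sqrt (u + t) : ℂ))
      (Set.Ioi 0) ∧
    ∫ y : ℝ, Complex.exp (-(Real.pi * t * y ^ 2 : ℝ)) / ((y : ℂ) - Complex.I * r) =
      (Real.pi : ℂ) * Complex.I * r *
        ∫ u in Set.Ioi (0 : ℝ),
          Complex.exp (-(Real.pi * r ^ 2 * u : ℝ)) / (Real.sqrt (u + t) : ℂ) := by
  have hgauss : Integrable fun y : ℝ => (Real.exp (-(Real.pi * t * y ^ 2)) : ℂ) := by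
    have h := integrable_exp_neg_mul_sq (mul_pos Real.pi_pos ht)
    simp only [neg_mul] at h
    exact h.ofReal
  have heichler := integrableOn_exp_neg_mul_div_sqrt_add (mul_pos Real.pi_pos (pow_pos hr 2)) ht
  simp_rw [← ofReal_neg, ← ofReal_exp, ← ofReal_div]
  refine ⟨hgauss.div_ofReal_sub_I_mul hr.ne', heichler.ofReal,
    (integral_div_ofReal_sub_I_mul_of_even hgauss (by simp) hr.ne').trans ?_⟩
  simp_rw [← ofReal_div]
  rw [integral_complex_ofReal, integral_complex_ofReal,
    integral_exp_neg_pi_mul_sq_div_sq_add_sq ht hr.ne']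
  push_cast
  ring
end

section
/- Let a : ℕ → ℂ be a sequence for which there exist constants c, d ≥ 0 with ‖a n‖ ≤ c · n^d for all n ≥ 1, and for z in the upper half-plane ℍ set g(z) = Σ_{n=1}^∞ a(n) e^{2πi n z}. Then for every real w > 1 and every τ ∈ ℍ, ∫_0^∞ g(τ + i s) · s^{w−2} ds = Γ(w − 1) · (2π)^{1−w} · Σ_{n=1}^∞ a(n) · n^{1−w} · e^{2πi n τ}, with the integral and the series absolutely convergent. -/
/-!
Write `g(τ + it) = Σ bₙ e^{-pₙ t}` with `bₙ = a(n+1) e^{2πi(n+1)τ}` and `pₙ = 2π(n+1)`. Since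
`Im τ > 0` and the coefficients grow polynomially, `Σ ‖bₙ‖` converges, so `g(τ + it)` decays like
`e^{-2πt}` and is bounded near `0`; hence its Mellin transform converges for `w - 1 > 0`, and
integrating term by term against `t^{w-2}` gives `Σ Γ(w-1) bₙ pₙ^{1-w}`.
-/

open Complex MeasureTheory Real Filter Set

section DirichletExponentialSeries

variable {ι : Type*} {b : ι → ℂ} {p : ι → ℝ}

lemma norm_mul_rexp_neg_mul_le (z : ℂ) {q q₀ t : ℝ} (hq : q₀ ≤ q) (ht : 0 ≤ t) :
    ‖z * rexp (-q * t)‖ ≤ ‖z‖ * rexp (-q₀ * t) := by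
  rw [norm_mul, norm_real, norm_of_nonneg (exp_pos _).le]
  gcongr

lemma summable_mul_rexp_neg_mul (hb : Summable (‖b ·‖)) {p₀ t : ℝ} (hp : ∀ i, p₀ ≤ p i)
    (ht : 0 ≤ t) : Summable fun i ↦ b i * rexp (-p i * t) :=
  .of_norm_bounded (hb.mul_right _) fun i ↦ norm_mul_rexp_neg_mul_le (b i) (hp i) ht

lemma norm_tsum_mul_rexp_neg_mul_le (hb : Summable (‖b ·‖)) {p₀ t : ℝ} (hp : ∀ i, p₀ ≤ p i)
    (ht : 0 ≤ t) : ‖∑' i, b i * rexp (-p i * t)‖ ≤ (∑' i, ‖b i‖) * rexp (-p₀ * t) :=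
  calc ‖∑' i, b i * rexp (-p i * t)‖
      ≤ ∑' i, ‖b i * rexp (-p i * t)‖ :=
        norm_tsum_le_tsum_norm (summable_mul_rexp_neg_mul hb hp ht).norm
    _ ≤ ∑' i, ‖b i‖ * rexp (-p₀ * t) :=
        (summable_mul_rexp_neg_mul hb hp ht).norm.tsum_le_tsum
          (fun i ↦ norm_mul_rexp_neg_mul_le (b i) (hp i) ht) (hb.mul_right _)
    _ = (∑' i, ‖b i‖) * rexp (-p₀ * t) := tsum_mul_right

lemma continuousOn_tsum_mul_rexp_neg_mul (hb : Summable (‖b ·‖)) (hp : ∀ i, 0 ≤ p i) :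
    ContinuousOn (fun t ↦ ∑' i, b i * rexp (-p i * t)) (Ici 0) :=
  continuousOn_tsum (fun _ ↦ by fun_prop) hb fun i t ht ↦ by
    simpa using norm_mul_rexp_neg_mul_le (b i) (hp i) ht

lemma mellinConvergent_tsum_mul_rexp_neg_mul (hb : Summable (‖b ·‖)) {p₀ : ℝ} (hp₀ : 0 < p₀)
    (hp : ∀ i, p₀ ≤ p i) {s : ℂ} (hs : 0 < s.re) :
    MellinConvergent (fun t ↦ ∑' i, b i * rexp (-p i * t)) s := by
  have hbound (t : ℝ) (ht : 0 ≤ t) := norm_tsum_mul_rexp_neg_mul_le hb hp ht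
  refine mellinConvergent_of_isBigO_rpow_exp hp₀ (b := 0) ?_ ?_ ?_ hs
  · exact ((continuousOn_tsum_mul_rexp_neg_mul hb fun i ↦ hp₀.le.trans (hp i)).mono
      Ioi_subset_Ici_self).locallyIntegrableOn measurableSet_Ioi
  · refine .of_bound (∑' i, ‖b i‖) ((eventually_ge_atTop 0).mono fun t ht ↦ ?_)
    simpa [norm_of_nonneg (exp_pos _).le] using hbound t ht
  · refine .of_bound (∑' i, ‖b i‖) (eventually_mem_nhdsWithin.mono fun t (ht : 0 < t) ↦ ?_)
    rw [neg_zero, rpow_zero, norm_one, mul_one]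
    refine (hbound t ht.le).trans (mul_le_of_le_one_right (tsum_nonneg fun _ ↦ norm_nonneg _) ?_)
    exact exp_le_one_iff.2 (by nlinarith)

lemma hasSum_mellin_tsum_mul_rexp_neg_mul [Countable ι] (hb : Summable (‖b ·‖)) {p₀ : ℝ}
    (hp₀ : 0 < p₀) (hp : ∀ i, p₀ ≤ p i) {s : ℂ} (hs : 0 < s.re) :
    HasSum (fun i ↦ Complex.Gamma s * b i / p i ^ s)
      (mellin (fun t ↦ ∑' i, b i * rexp (-p i * t)) s) := by
  refine hasSum_mellin (fun i ↦ .inr (hp₀.trans_le (hp i))) hs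
    (fun t ht ↦ (summable_mul_rexp_neg_mul hb hp (le_of_lt ht)).hasSum) ?_
  refine (hb.div_const (p₀ ^ s.re)).of_nonneg_of_le
    (fun i ↦ div_nonneg (norm_nonneg _) (rpow_nonneg (hp₀.le.trans (hp i)) _)) fun i ↦ ?_
  gcongr
  exact hp i

end DirichletExponentialSeries

lemma mul_ofReal_rpow_eqOn_cpow_smul (f : ℝ → ℂ) (σ : ℝ) :
    EqOn (fun t : ℝ ↦ f t * ((t ^ (σ - 1) : ℝ) : ℂ)) (fun t ↦ (t : ℂ) ^ ((σ : ℂ) - 1) • f t)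
      (Ioi 0) := fun t ht ↦ by
  dsimp only
  rw [smul_eq_mul, mul_comm, ofReal_cpow (le_of_lt ht)]
  push_cast
  rfl

lemma div_ofReal_mul_cpow (z : ℂ) {x y : ℝ} (hx : 0 ≤ x) (hy : 0 ≤ y) (σ : ℝ) :
    z / ((x * y : ℝ) : ℂ) ^ (σ : ℂ) = ((x ^ (-σ) : ℝ) : ℂ) * (z * ((y ^ (-σ) : ℝ) : ℂ)) := by
  rw [← ofReal_cpow (mul_nonneg hx hy), mul_rpow hx hy, rpow_neg hx, rpow_neg hy]
  push_cast
  ring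

lemma summable_norm_mul_pow_of_norm_le_rpow {E : Type*} [SeminormedAddCommGroup E] {a : ℕ → E}
    {c d r : ℝ} (hc : 0 ≤ c) (ha : ∀ n : ℕ, 1 ≤ n → ‖a n‖ ≤ c * (n : ℝ) ^ d) (hr₀ : 0 ≤ r)
    (hr₁ : r < 1) : Summable fun n ↦ ‖a n‖ * r ^ n := by
  have hgeom : Summable fun n : ℕ ↦ c * ((n : ℝ) ^ ⌈d⌉₊ * r ^ n) :=
    (summable_pow_mul_geometric_of_norm_lt_one _ (by rwa [norm_of_nonneg hr₀])).mul_left c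
  refine .of_norm_bounded_eventually_nat hgeom ((eventually_ge_atTop 1).mono fun n hn ↦ ?_)
  have hpow : (n : ℝ) ^ d ≤ (n : ℝ) ^ ⌈d⌉₊ := by
    rw [← rpow_natCast]
    exact rpow_le_rpow_of_exponent_le (mod_cast hn) (Nat.le_ceil d)
  rw [norm_of_nonneg (by positivity), ← mul_assoc]
  gcongr
  exact (ha n hn).trans (by gcongr)

lemma cexp_two_pi_I_mul_add_I_mul (m t : ℝ) (τ : ℂ) :
    cexp (2 * π * I * m * (τ + I * t)) = cexp (2 * π * I * m * τ) * rexp (-(2 * π * m) * t) := by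
  rw [ofReal_exp, ← Complex.exp_add]
  congr 1
  push_cast
  linear_combination (2 * π * m * t : ℂ) * I_sq

lemma summable_norm_mul_cexp_two_pi_I_mul {a : ℕ → ℂ} {c d : ℝ} (hc : 0 ≤ c)
    (ha : ∀ n : ℕ, 1 ≤ n → ‖a n‖ ≤ c * (n : ℝ) ^ d) {τ : ℂ} (hτ : 0 < τ.im) :
    Summable fun n : ℕ ↦ ‖a (n + 1) * cexp (2 * π * I * ((n : ℂ) + 1) * τ)‖ := by
  have hq : ‖cexp (2 * π * I * τ)‖ < 1 := UpperHalfPlane.norm_exp_two_pi_I_lt_one ⟨τ, hτ⟩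
  refine ((summable_nat_add_iff 1).2
    (summable_norm_mul_pow_of_norm_le_rpow hc ha (norm_nonneg _) hq)).congr fun n ↦ ?_
  rw [norm_mul, ← norm_pow, ← Complex.exp_nat_mul]
  push_cast
  ring_nf

theorem eichler_integral_eq_period_integral_general (a : ℕ → ℂ) (c d : ℝ)
    (hc : 0 ≤ c)
    (ha : ∀ n : ℕ, 1 ≤ n → ‖a n‖ ≤ c * (n : ℝ) ^ d)
    (w : ℝ) (hw : 1 < w) (τ : ℂ) (hτ : 0 < τ.im) :
    IntegrableOn
      (fun s : ℝ =>
        (∑' n : ℕ, a (n + 1) *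
            Complex.exp (2 * Real.pi * Complex.I * ((n : ℂ) + 1) *
              (τ + Complex.I * s))) *
          ((s ^ (w - 2) : ℝ) : ℂ))
      (Set.Ioi 0) ∧
    (Summable fun n : ℕ =>
      ‖a (n + 1) * ((((n : ℝ) + 1) ^ (1 - w) : ℝ) : ℂ) *
        Complex.exp (2 * Real.pi * Complex.I * ((n : ℂ) + 1) * τ)‖) ∧
    ∫ s in Set.Ioi (0 : ℝ),
        (∑' n : ℕ, a (n + 1) *
            Complex.exp (2 * Real.pi * Complex.I * ((n : ℂ) + 1) *
              (τ + Complex.I * s))) *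
          ((s ^ (w - 2) : ℝ) : ℂ) =
      (Real.Gamma (w - 1) : ℂ) * (((2 * Real.pi) ^ (1 - w) : ℝ) : ℂ) *
        ∑' n : ℕ, a (n + 1) * ((((n : ℝ) + 1) ^ (1 - w) : ℝ) : ℂ) *
          Complex.exp (2 * Real.pi * Complex.I * ((n : ℂ) + 1) * τ) := by
  set b : ℕ → ℂ := fun n ↦ a (n + 1) * cexp (2 * π * I * ((n : ℂ) + 1) * τ)
  set p : ℕ → ℝ := fun n ↦ 2 * π * ((n : ℝ) + 1)
  have hseries (t : ℝ) : ∑' n : ℕ, a (n + 1) * cexp (2 * π * I * ((n : ℂ) + 1) * (τ + I * t)) =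
      ∑' n, b n * rexp (-p n * t) := by
    refine tsum_congr fun n ↦ ?_
    have := cexp_two_pi_I_mul_add_I_mul ((n : ℝ) + 1) t τ
    simp only [ofReal_add, ofReal_natCast, ofReal_one] at this
    rw [this, ← mul_assoc]
  have hb : Summable (‖b ·‖) := summable_norm_mul_cexp_two_pi_I_mul hc ha hτ
  have hp (n : ℕ) : 2 * π ≤ p n := le_mul_of_one_le_right two_pi_pos.le (by simp)
  have hs : 0 < ((w - 1 : ℝ) : ℂ).re := by simpa using hw
  have hintegrand := mul_ofReal_rpow_eqOn_cpow_smul (fun t ↦ ∑' n, b n * rexp (-p n * t)) (w - 1)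
  simp only [hseries, show w - 2 = w - 1 - 1 by ring]
  refine ⟨(mellinConvergent_tsum_mul_rexp_neg_mul hb two_pi_pos hp hs).congr_fun
    hintegrand.symm measurableSet_Ioi, ?_, ?_⟩
  · refine hb.of_nonneg_of_le (fun _ ↦ norm_nonneg _) fun n ↦ ?_
    rw [mul_right_comm, norm_mul]
    refine mul_le_of_le_one_right (norm_nonneg _) ?_
    rw [norm_real, norm_of_nonneg (by positivity)]
    exact rpow_le_one_of_one_le_of_nonpos (by simp) (by linarith)
  · have hmellin := (hasSum_mellin_tsum_mul_rexp_neg_mul hb two_pi_pos hp hs).tsum_eq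
    rw [mellin] at hmellin
    rw [setIntegral_congr_fun measurableSet_Ioi hintegrand, ← hmellin, ← tsum_mul_left]
    refine tsum_congr fun n ↦ ?_
    rw [mul_div_assoc, div_ofReal_mul_cpow _ two_pi_pos.le (by positivity), Complex.Gamma_ofReal,
      neg_sub]
    ring

/-- the Eichler integral of a cusp-form-like `q`-series as a period
integral along the vertical ray: for `g(z) = Σ_{n≥1} a(n) e^{2πinz}` with
polynomially bounded coefficients, `w > 1` and `τ ∈ ℍ`,
`∫_0^∞ g(τ+is) s^{w−2} ds = Γ(w−1)(2π)^{1−w} Σ_{n≥1} a(n) n^{1−w} e^{2πinτ}`. -/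
theorem eichler_integral_eq_period_integral (a : ℕ → ℂ) (c d : ℝ)
    (hc : 0 ≤ c) (hd : 0 ≤ d)
    (ha : ∀ n : ℕ, 1 ≤ n → ‖a n‖ ≤ c * (n : ℝ) ^ d)
    (w : ℝ) (hw : 1 < w) (τ : ℂ) (hτ : 0 < τ.im) :
    IntegrableOn
      (fun s : ℝ =>
        (∑' n : ℕ, a (n + 1) *
            Complex.exp (2 * Real.pi * Complex.I * ((n : ℂ) + 1) *
              (τ + Complex.I * s))) *
          ((s ^ (w - 2) : ℝ) : ℂ))
      (Set.Ioi 0) ∧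
    (Summable fun n : ℕ =>
      ‖a (n + 1) * ((((n : ℝ) + 1) ^ (1 - w) : ℝ) : ℂ) *
        Complex.exp (2 * Real.pi * Complex.I * ((n : ℂ) + 1) * τ)‖) ∧
    ∫ s in Set.Ioi (0 : ℝ),
        (∑' n : ℕ, a (n + 1) *
            Complex.exp (2 * Real.pi * Complex.I * ((n : ℂ) + 1) *
              (τ + Complex.I * s))) *
          ((s ^ (w - 2) : ℝ) : ℂ) =
      (Real.Gamma (w - 1) : ℂ) * (((2 * Real.pi) ^ (1 - w) : ℝ) : ℂ) *
        ∑' n : ℕ, a (n + 1) * ((((n : ℝ) + 1) ^ (1 - w) : ℝ) : ℂ) *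
          Complex.exp (2 * Real.pi * Complex.I * ((n : ℂ) + 1) * τ) :=
  eichler_integral_eq_period_integral_general a c d hc ha w hw τ hτ
end

section
/- For every complex number q with |q| < 1, Σ_{n=0}^∞ q^{n²} / (∏_{k=1}^n (1 + q^k))² = 1 − Σ_{n=1}^∞ (−1)^n q^n / ∏_{k=1}^n (1 + q^k), both series converging absolutely. Equivalently, Ramanujan's order-three mock theta function f(q) = Σ_{n≥0} q^{n²}/(−q;q)_n² equals 1 − Σ_{n≥1}(−1)^n q^n/(−q;q)_n. -/
/-!
Write `(-q;q)_n` for `negQPoch q n` and put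
`F_j = Σ_n q^(n² + jn) / ((-q;q)_n (-q;q)_(n+j))`, so that `f(q) = F_0`, and
`G_j = Σ_n (-1)^n q^(jn) / (-q;q)_n` for `j ≥ 1`. Both families satisfy three-term relations
`F_j + F_(j+1) = 2 / (-q;q)_j` and `(1 + q^j) G_j + G_(j+1) = 2`, because in each case the sum of
the `n`-th terms is `w_n - w_(n+1)` with `w_n = t_n (1 + q^n)`, `t_n` the `n`-th term of `F_j`
resp. `G_j`. Hence `D_j = G_j - (-q;q)_(j-1) F_j` satisfies `D_(j+1) = -(1 + q^j) D_j`, so that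
`‖D_j‖ = ‖(-q;q)_(j-1)‖ ‖D_1‖`. As `j → ∞`, dominated convergence gives `G_j → 1` and
`(-q;q)_(j-1) F_j → 1`, while `‖(-q;q)_n‖` stays bounded away from `0`; so `D_1 = 0` and
`f(q) = 2 - F_1 = 2 - G_1`, which is the second expression.
-/

open Filter Topology Finset

lemma Real.exp_neg_div_le_one_sub {y r : ℝ} (hy : 0 ≤ y) (hyr : y ≤ r) (hr : r < 1) :
    Real.exp (-(y / (1 - r))) ≤ 1 - y := by
  have hy1 : 0 < 1 - y := by linarith
  have hlog : 1 - (1 - y)⁻¹ ≤ Real.log (1 - y) := Real.one_sub_inv_le_log_of_pos hy1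
  have hdiv : y / (1 - y) ≤ y / (1 - r) := div_le_div_of_nonneg_left hy (by linarith) (by linarith)
  have hinv : 1 - (1 - y)⁻¹ = -(y / (1 - y)) := by field_simp; ring
  calc Real.exp (-(y / (1 - r))) ≤ Real.exp (Real.log (1 - y)) :=
        Real.exp_le_exp.2 (by linarith)
    _ = 1 - y := Real.exp_log hy1

lemma sum_range_pow_succ_le {r : ℝ} (hr0 : 0 ≤ r) (hr : r < 1) (n : ℕ) :
    ∑ k ∈ range n, r ^ (k + 1) ≤ r / (1 - r) := by
  have := geom_sum_Ico_le_of_lt_one (m := 1) (n := n + 1) hr0 hr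
  rw [Finset.sum_Ico_eq_sum_range] at this
  simpa [add_comm] using this

lemma tsum_sub_succ_of_tendsto_zero {G : Type*} [AddCommGroup G] [TopologicalSpace G]
    [IsTopologicalAddGroup G] [T2Space G] {v : ℕ → G}
    (hs : Summable fun n => v n - v (n + 1)) (hv : Tendsto v atTop (𝓝 0)) :
    ∑' n, (v n - v (n + 1)) = v 0 := by
  refine tendsto_nhds_unique hs.hasSum.tendsto_sum_nat ?_
  simp only [Finset.sum_range_sub']
  simpa using tendsto_const_nhds.sub hv

lemma tendsto_tsum_of_norm_le_pow {G : Type*} [NormedAddCommGroup G] [CompleteSpace G]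
    {t : ℕ → ℕ → G} {a : G} {C r : ℝ} (hr0 : 0 ≤ r) (hr : r < 1)
    (h0 : Tendsto (fun m => t m 0) atTop (𝓝 a)) (hb : ∀ m n, ‖t m n‖ ≤ C * r ^ ((m + 1) * n)) :
    Tendsto (fun m => ∑' n, t m n) atTop (𝓝 a) := by
  have hC : 0 ≤ C := by simpa using (norm_nonneg _).trans (hb 0 0)
  have hlim : ∀ n, Tendsto (fun m => t m n) atTop (𝓝 (if n = 0 then a else 0))
    | 0 => h0
    | n + 1 => by
      have hrn : Tendsto (fun m => C * (r ^ (n + 1)) ^ (m + 1)) atTop (𝓝 0) := by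
        simpa using ((tendsto_pow_atTop_nhds_zero_of_lt_one (by positivity)
          (pow_lt_one₀ hr0 hr n.succ_ne_zero)).comp (tendsto_add_atTop_nat 1)).const_mul C
      refine squeeze_zero_norm (fun m => ?_) hrn
      simpa [← pow_mul, mul_comm] using hb m (n + 1)
  have hdom : ∀ m n, ‖t m n‖ ≤ C * r ^ n := fun m n =>
    (hb m n).trans <| mul_le_mul_of_nonneg_left
      (pow_le_pow_of_le_one hr0 hr.le (Nat.le_mul_of_pos_left n m.succ_pos)) hC
  simpa using tendsto_tsum_of_dominated_convergence
    ((summable_geometric_of_lt_one hr0 hr).mul_left C) hlim (Eventually.of_forall hdom)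

lemma summable_norm_of_norm_le_pow {E : Type*} [SeminormedAddCommGroup E] {u : ℕ → E}
    {e : ℕ → ℕ} {C r : ℝ} (hr0 : 0 ≤ r) (hr : r < 1) (he : ∀ n, n ≤ e n)
    (hu : ∀ n, ‖u n‖ ≤ C * r ^ e n) : Summable fun n => ‖u n‖ := by
  have hpow : Summable fun n => r ^ e n :=
    (summable_geometric_of_lt_one hr0 hr).of_nonneg_of_le (fun _ => by positivity)
      fun n => pow_le_pow_of_le_one hr0 hr.le (he n)
  exact (hpow.mul_left C).of_nonneg_of_le (fun _ => norm_nonneg _) hu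

namespace MockThetaF

noncomputable def negQPoch (q : ℂ) (n : ℕ) : ℂ := ∏ k ∈ range n, (1 + q ^ (k + 1))

@[simp] lemma negQPoch_zero (q : ℂ) : negQPoch q 0 = 1 := prod_range_zero _

lemma negQPoch_succ (q : ℂ) (n : ℕ) : negQPoch q (n + 1) = negQPoch q n * (1 + q ^ (n + 1)) :=
  prod_range_succ _ _

variable {q : ℂ}

lemma exists_pos_le_norm_negQPoch (hq : ‖q‖ < 1) : ∃ c > 0, ∀ n, c ≤ ‖negQPoch q n‖ := by
  refine ⟨Real.exp (-(‖q‖ / (1 - ‖q‖) / (1 - ‖q‖))), Real.exp_pos _, fun n => ?_⟩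
  have hfactor (k : ℕ) : Real.exp (-(‖q‖ ^ (k + 1) / (1 - ‖q‖))) ≤ ‖1 + q ^ (k + 1)‖ :=
    calc Real.exp (-(‖q‖ ^ (k + 1) / (1 - ‖q‖))) ≤ 1 - ‖q ^ (k + 1)‖ := by
          rw [norm_pow]
          exact Real.exp_neg_div_le_one_sub (by positivity)
            (pow_le_of_le_one (norm_nonneg q) hq.le k.succ_ne_zero) hq
      _ ≤ ‖1 + q ^ (k + 1)‖ := by simpa using norm_sub_norm_le (1 : ℂ) (-q ^ (k + 1))
  calc Real.exp (-(‖q‖ / (1 - ‖q‖) / (1 - ‖q‖)))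
      ≤ Real.exp (∑ k ∈ range n, -(‖q‖ ^ (k + 1) / (1 - ‖q‖))) := by
        rw [Real.exp_le_exp, sum_neg_distrib, ← sum_div, neg_le_neg_iff]
        exact div_le_div_of_nonneg_right (sum_range_pow_succ_le (norm_nonneg q) hq n)
          (by linarith)
    _ ≤ ‖negQPoch q n‖ := by
        rw [Real.exp_sum, negQPoch, norm_prod]
        exact prod_le_prod (fun _ _ => (Real.exp_pos _).le) fun k _ => hfactor k

lemma exists_norm_negQPoch_le (hq : ‖q‖ < 1) : ∃ C ≥ 0, ∀ n, ‖negQPoch q n‖ ≤ C := by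
  refine ⟨Real.exp (‖q‖ / (1 - ‖q‖)), (Real.exp_pos _).le, fun n => ?_⟩
  calc ‖negQPoch q n‖ ≤ ∏ k ∈ range n, (1 + ‖q‖ ^ (k + 1)) := by
        rw [negQPoch, norm_prod]
        exact prod_le_prod (fun _ _ => norm_nonneg _) fun k _ => by
          simpa using norm_add_le (1 : ℂ) (q ^ (k + 1))
    _ ≤ Real.exp (∑ k ∈ range n, ‖q‖ ^ (k + 1)) :=
        Real.prod_one_add_le_exp_sum _ fun _ => by positivity
    _ ≤ Real.exp (‖q‖ / (1 - ‖q‖)) :=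
        Real.exp_le_exp.2 (sum_range_pow_succ_le (norm_nonneg q) hq n)

lemma negQPoch_ne_zero (hq : ‖q‖ < 1) (n : ℕ) : negQPoch q n ≠ 0 := by
  obtain ⟨c, hc, hle⟩ := exists_pos_le_norm_negQPoch hq
  exact norm_pos_iff.1 (hc.trans_le (hle n))

lemma one_add_pow_succ_ne_zero (hq : ‖q‖ < 1) (n : ℕ) : 1 + q ^ (n + 1) ≠ 0 :=
  right_ne_zero_of_mul (negQPoch_succ q n ▸ negQPoch_ne_zero hq (n + 1))

noncomputable def fTerm (q : ℂ) (j n : ℕ) : ℂ :=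
  q ^ (n ^ 2 + j * n) / (negQPoch q n * negQPoch q (n + j))

noncomputable def gTerm (q : ℂ) (j n : ℕ) : ℂ := (-1) ^ n * q ^ (j * n) / negQPoch q n

lemma fTerm_add_fTerm_succ (hq : ‖q‖ < 1) (j n : ℕ) :
    fTerm q j n + fTerm q (j + 1) n =
      fTerm q j n * (1 + q ^ n) - fTerm q j (n + 1) * (1 + q ^ (n + 1)) := by
  have hn := negQPoch_ne_zero hq n
  have hnj := negQPoch_ne_zero hq (n + j)
  have h1 := one_add_pow_succ_ne_zero hq n
  have h2 := one_add_pow_succ_ne_zero hq (n + j)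
  simp only [fTerm, show n + 1 + j = n + j + 1 by ring, show n + (j + 1) = n + j + 1 by ring,
    negQPoch_succ]
  field_simp
  ring

lemma mul_gTerm_add_gTerm_succ (hq : ‖q‖ < 1) (j n : ℕ) :
    (1 + q ^ j) * gTerm q j n + gTerm q (j + 1) n =
      gTerm q j n * (1 + q ^ n) - gTerm q j (n + 1) * (1 + q ^ (n + 1)) := by
  have hn := negQPoch_ne_zero hq n
  have h1 := one_add_pow_succ_ne_zero hq n
  simp only [gTerm, negQPoch_succ]
  field_simp
  ring

lemma exists_norm_fTerm_le (hq : ‖q‖ < 1) :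
    ∃ C ≥ 0, ∀ j n, ‖fTerm q j n‖ ≤ C * ‖q‖ ^ (n ^ 2 + j * n) := by
  obtain ⟨c, hc, hle⟩ := exists_pos_le_norm_negQPoch hq
  refine ⟨(c * c)⁻¹, by positivity, fun j n => ?_⟩
  rw [fTerm, norm_div, norm_mul, norm_pow, div_eq_inv_mul]
  exact mul_le_mul_of_nonneg_right
    (inv_anti₀ (by positivity) (mul_le_mul (hle _) (hle _) hc.le (norm_nonneg _))) (by positivity)

lemma exists_norm_gTerm_le (hq : ‖q‖ < 1) : ∃ C, ∀ j n, ‖gTerm q j n‖ ≤ C * ‖q‖ ^ (j * n) := by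
  obtain ⟨c, hc, hle⟩ := exists_pos_le_norm_negQPoch hq
  refine ⟨c⁻¹, fun j n => ?_⟩
  rw [gTerm, norm_div, norm_mul, norm_pow, norm_pow, norm_neg, norm_one, one_pow, one_mul,
    div_eq_inv_mul]
  exact mul_le_mul_of_nonneg_right (inv_anti₀ hc (hle n)) (by positivity)

lemma summable_norm_fTerm (hq : ‖q‖ < 1) (j : ℕ) : Summable fun n => ‖fTerm q j n‖ := by
  obtain ⟨C, -, hC⟩ := exists_norm_fTerm_le hq
  exact summable_norm_of_norm_le_pow (norm_nonneg q) hq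
    (fun n => (Nat.le_self_pow two_ne_zero n).trans (Nat.le_add_right _ _)) (hC j)

lemma summable_norm_gTerm (hq : ‖q‖ < 1) (j : ℕ) : Summable fun n => ‖gTerm q (j + 1) n‖ := by
  obtain ⟨C, hC⟩ := exists_norm_gTerm_le hq
  exact summable_norm_of_norm_le_pow (norm_nonneg q) hq
    (fun n => Nat.le_mul_of_pos_left n j.succ_pos) (hC (j + 1))

lemma tsum_eq_two_mul_of_telescope (hq : ‖q‖ < 1) {u t : ℕ → ℂ} (hu : Summable u)
    (ht : Summable t) (h : ∀ n, u n = t n * (1 + q ^ n) - t (n + 1) * (1 + q ^ (n + 1))) :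
    ∑' n, u n = 2 * t 0 := by
  have hv : Tendsto (fun n => t n * (1 + q ^ n)) atTop (𝓝 0) := by
    simpa using ht.tendsto_atTop_zero.mul
      (tendsto_const_nhds.add (tendsto_pow_atTop_nhds_zero_of_norm_lt_one hq))
  rw [tsum_congr h, tsum_sub_succ_of_tendsto_zero (hu.congr h) hv]
  norm_num [mul_comm]

noncomputable def fSeries (q : ℂ) (j : ℕ) : ℂ := ∑' n, fTerm q j n

/-- Only used for `j ≥ 1`: at `j = 0` the series diverges and `tsum` returns the junk value `0`. -/
noncomputable def gSeries (q : ℂ) (j : ℕ) : ℂ := ∑' n, gTerm q j n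

lemma fSeries_add_fSeries_succ (hq : ‖q‖ < 1) (j : ℕ) :
    fSeries q j + fSeries q (j + 1) = 2 / negQPoch q j := by
  have hs := (summable_norm_fTerm hq j).of_norm
  have hs' := (summable_norm_fTerm hq (j + 1)).of_norm
  rw [fSeries, fSeries, ← hs.tsum_add hs',
    tsum_eq_two_mul_of_telescope hq (hs.add hs') hs (fTerm_add_fTerm_succ hq j)]
  simp [fTerm, div_eq_mul_inv]

lemma mul_gSeries_add_gSeries_succ (hq : ‖q‖ < 1) (j : ℕ) :
    (1 + q ^ (j + 1)) * gSeries q (j + 1) + gSeries q (j + 2) = 2 := by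
  have hs := (summable_norm_gTerm hq j).of_norm
  have hs' := (summable_norm_gTerm hq (j + 1)).of_norm
  rw [gSeries, gSeries, ← tsum_mul_left, ← (hs.mul_left _).tsum_add hs',
    tsum_eq_two_mul_of_telescope hq ((hs.mul_left _).add hs') hs
      (mul_gTerm_add_gTerm_succ hq (j + 1))]
  simp [gTerm]

lemma tendsto_gSeries (hq : ‖q‖ < 1) : Tendsto (fun m => gSeries q (m + 1)) atTop (𝓝 1) := by
  obtain ⟨C, hC⟩ := exists_norm_gTerm_le hq
  exact tendsto_tsum_of_norm_le_pow (norm_nonneg q) hq (by simp [gTerm]) fun m => hC (m + 1)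

lemma tendsto_negQPoch_mul_fSeries (hq : ‖q‖ < 1) :
    Tendsto (fun m => negQPoch q m * fSeries q (m + 1)) atTop (𝓝 1) := by
  obtain ⟨C, hC0, hC⟩ := exists_norm_fTerm_le hq
  obtain ⟨C', hC'0, hC'⟩ := exists_norm_negQPoch_le hq
  have hfirst (m : ℕ) : negQPoch q m * fTerm q (m + 1) 0 = (1 + q ^ (m + 1))⁻¹ := by
    simp only [fTerm, negQPoch_succ, zero_add]
    field_simp [negQPoch_ne_zero hq m]
    simp
  simp_rw [fSeries, ← tsum_mul_left]
  refine tendsto_tsum_of_norm_le_pow (C := C' * C) (norm_nonneg q) hq ?_ fun m n => ?_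
  · simp_rw [hfirst]
    simpa using (((tendsto_pow_atTop_nhds_zero_of_norm_lt_one hq).comp
      (tendsto_add_atTop_nat 1)).const_add 1).inv₀ (by norm_num)
  · calc ‖negQPoch q m * fTerm q (m + 1) n‖ ≤ C' * (C * ‖q‖ ^ (n ^ 2 + (m + 1) * n)) := by
          rw [norm_mul]
          exact mul_le_mul (hC' m) (hC _ _) (norm_nonneg _) hC'0
      _ ≤ C' * C * ‖q‖ ^ ((m + 1) * n) := by
          rw [← mul_assoc]
          exact mul_le_mul_of_nonneg_left
            (pow_le_pow_of_le_one (norm_nonneg q) hq.le (Nat.le_add_left _ _)) (by positivity)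

lemma gSeries_one_eq_fSeries_one (hq : ‖q‖ < 1) : gSeries q 1 = fSeries q 1 := by
  set D : ℕ → ℂ := fun m => gSeries q (m + 1) - negQPoch q m * fSeries q (m + 1) with hD
  have hDm (m : ℕ) : D m = (-1) ^ m * negQPoch q m * D 0 := by
    induction m with
    | zero => simp
    | succ m ih =>
      have hg := mul_gSeries_add_gSeries_succ hq m
      have hf : negQPoch q (m + 1) * (fSeries q (m + 1) + fSeries q (m + 2)) = 2 := by
        rw [fSeries_add_fSeries_succ hq (m + 1), mul_div_cancel₀ _ (negQPoch_ne_zero hq _)]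
      simp only [hD] at ih ⊢
      rw [negQPoch_succ] at hf ⊢
      linear_combination hg - hf - (1 + q ^ (m + 1)) * ih
  obtain ⟨c, hc, hle⟩ := exists_pos_le_norm_negQPoch hq
  have hlim : Tendsto (fun m => ‖D m‖) atTop (𝓝 0) := by
    simpa [hD] using ((tendsto_gSeries hq).sub (tendsto_negQPoch_mul_fSeries hq)).norm
  have hle' (m : ℕ) : c * ‖D 0‖ ≤ ‖D m‖ := by
    rw [hDm m, norm_mul, norm_mul, norm_pow, norm_neg, norm_one, one_pow, one_mul]
    exact mul_le_mul_of_nonneg_right (hle m) (norm_nonneg _)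
  have hD0 : ‖D 0‖ = 0 := by
    nlinarith [ge_of_tendsto' hlim hle', norm_nonneg (D 0)]
  simpa [hD, sub_eq_zero] using hD0

end MockThetaF

/-- two `q`-hypergeometric expressions for Ramanujan's order-three
mock theta function `f(q)`:
`Σ_{n≥0} q^{n²}/(−q;q)_n² = 1 − Σ_{n≥1} (−1)ⁿ qⁿ/(−q;q)_n`. -/
theorem mock_f_two_expressions (q : ℂ) (hq : ‖q‖ < 1) :
    (Summable fun n : ℕ =>
      ‖q ^ (n ^ 2) / (∏ k ∈ Finset.range n, (1 + q ^ (k + 1))) ^ 2‖) ∧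
    (Summable fun n : ℕ =>
      ‖(-1 : ℂ) ^ (n + 1) * q ^ (n + 1) /
        ∏ k ∈ Finset.range (n + 1), (1 + q ^ (k + 1))‖) ∧
    ∑' n : ℕ, q ^ (n ^ 2) / (∏ k ∈ Finset.range n, (1 + q ^ (k + 1))) ^ 2 =
      1 - ∑' n : ℕ, (-1 : ℂ) ^ (n + 1) * q ^ (n + 1) /
        ∏ k ∈ Finset.range (n + 1), (1 + q ^ (k + 1)) :=
  open MockThetaF in by
  have hf (n : ℕ) : q ^ (n ^ 2) / (∏ k ∈ range n, (1 + q ^ (k + 1))) ^ 2 = fTerm q 0 n := by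
    simp [fTerm, negQPoch, sq]
  have hg (n : ℕ) : (-1 : ℂ) ^ (n + 1) * q ^ (n + 1) / ∏ k ∈ range (n + 1), (1 + q ^ (k + 1)) =
      gTerm q 1 (n + 1) := by
    simp [gTerm, negQPoch]
  simp only [hf, hg]
  change _ ∧ _ ∧ fSeries q 0 = _
  have hgs := summable_norm_gTerm hq 0
  refine ⟨summable_norm_fTerm hq 0, (summable_nat_add_iff 1).2 hgs, ?_⟩
  have hsplit : gSeries q 1 = 1 + ∑' n, gTerm q 1 (n + 1) := by
    rw [gSeries, hgs.of_norm.tsum_eq_zero_add]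
    simp [gTerm]
  have hsum := fSeries_add_fSeries_succ hq 0
  rw [gSeries_one_eq_fSeries_one hq] at hsplit
  simp only [negQPoch_zero, div_one, zero_add] at hsum
  linear_combination hsum - hsplit
end
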